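/- arXiv:1607.07088 — 13 statements merged into one kernel-verified Lean document; each statement's English description precedes it below -/
import Mathlib

section
/- If s : ℝ → ℝ is twice differentiable on an interval I containing 0, satisfies s''(t) = 6 s(t)^2 + 6 t on I, with s(0) = 0 and s'(0) = 0, then for every t > 0 in I we have s'(t) > 3 t^2 and s(t) > t^3. -/
/-!
With `g = s' - 3 t²` the equation reads `g' = 6 s²`, so `g` is nondecreasing from `g 0 = 0`.
Hence `s' ≥ 3 t² > 0` for `t > 0`, so `s > 0` there; then `g' > 0`, so `g > 0`, and finally
`(s - t³)' = g > 0` gives `s > t³`.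
-/

open Set

section
variable {f f' : ℝ → ℝ} {b : ℝ}

lemma nonneg_of_hasDerivAt_nonneg (hf : ∀ u ∈ Ico 0 b, HasDerivAt f (f' u) u) (hf0 : f 0 = 0)
    (hf' : ∀ u ∈ Ioo 0 b, 0 ≤ f' u) : ∀ u ∈ Ico 0 b, 0 ≤ f u := by
  have hmono : MonotoneOn f (Ico 0 b) :=
    monotoneOn_of_hasDerivWithinAt_nonneg (convex_Ico 0 b)
      (fun u hu ↦ (hf u hu).continuousAt.continuousWithinAt)
      (fun u hu ↦ (hf u (interior_subset hu)).hasDerivWithinAt)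
      (fun u hu ↦ hf' u (by rwa [interior_Ico] at hu))
  intro u hu
  simpa [hf0] using hmono ⟨le_rfl, hu.1.trans_lt hu.2⟩ hu hu.1

lemma pos_of_hasDerivAt_pos (hf : ∀ u ∈ Ico 0 b, HasDerivAt f (f' u) u) (hf0 : f 0 = 0)
    (hf' : ∀ u ∈ Ioo 0 b, 0 < f' u) : ∀ u ∈ Ioo 0 b, 0 < f u := by
  have hmono : StrictMonoOn f (Ico 0 b) :=
    strictMonoOn_of_hasDerivWithinAt_pos (convex_Ico 0 b)
      (fun u hu ↦ (hf u hu).continuousAt.continuousWithinAt)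
      (fun u hu ↦ (hf u (interior_subset hu)).hasDerivWithinAt)
      (fun u hu ↦ hf' u (by rwa [interior_Ico] at hu))
  intro u hu
  simpa [hf0] using hmono ⟨le_rfl, hu.1.trans hu.2⟩ (Ioo_subset_Ico_self hu) hu.1

end

theorem painleve_initial_growth_general
    (s : ℝ → ℝ) (a b : ℝ) (ha : a < 0)
    (hdiff : ∀ t ∈ Ioo a b, DifferentiableAt ℝ s t ∧ DifferentiableAt ℝ (deriv s) t)
    (heq : ∀ t ∈ Ioo a b, deriv (deriv s) t = 6 * (s t) ^ 2 + 6 * t)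
    (h0 : s 0 = 0) (h0' : deriv s 0 = 0) :
    ∀ t ∈ Ioo a b, 0 < t → deriv s t > 3 * t ^ 2 ∧ s t > t ^ 3 := by
  have hsub : Ico 0 b ⊆ Ioo a b := fun u hu ↦ ⟨ha.trans_le hu.1, hu.2⟩
  have hs : ∀ u ∈ Ico 0 b, HasDerivAt s (deriv s u) u :=
    fun u hu ↦ (hdiff u (hsub hu)).1.hasDerivAt
  set g : ℝ → ℝ := fun u ↦ deriv s u - 3 * u ^ 2
  have hg : ∀ u ∈ Ico 0 b, HasDerivAt g (6 * s u ^ 2) u := fun u hu ↦ by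
    have := (hdiff u (hsub hu)).2.hasDerivAt.fun_sub ((hasDerivAt_pow 2 u).const_mul 3)
    rw [heq u (hsub hu)] at this
    exact this.congr_deriv (by push_cast; ring)
  have hg0 : g 0 = 0 := by simp [g, h0']
  have hg_nonneg : ∀ u ∈ Ico 0 b, 0 ≤ g u :=
    nonneg_of_hasDerivAt_nonneg hg hg0 fun u _ ↦ by positivity
  have hs_pos : ∀ u ∈ Ioo 0 b, 0 < s u :=
    pos_of_hasDerivAt_pos hs h0 fun u hu ↦ by
      have := hg_nonneg u (Ioo_subset_Ico_self hu)
      nlinarith [hu.1]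
  have hg_pos : ∀ u ∈ Ioo 0 b, 0 < g u :=
    pos_of_hasDerivAt_pos hg hg0 fun u hu ↦ by have := hs_pos u hu; positivity
  have hcubic : ∀ u ∈ Ico 0 b, HasDerivAt (fun u ↦ s u - u ^ 3) (g u) u :=
    fun u hu ↦ ((hs u hu).fun_sub (hasDerivAt_pow 3 u)).congr_deriv (by simp [g])
  have hcubic_pos : ∀ u ∈ Ioo 0 b, 0 < s u - u ^ 3 :=
    pos_of_hasDerivAt_pos hcubic (by simp [h0]) hg_pos
  intro t ht htpos
  have ht' : t ∈ Ioo 0 b := ⟨htpos, ht.2⟩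
  exact ⟨by linarith [hg_pos t ht'], by linarith [hcubic_pos t ht']⟩

theorem painleve_initial_growth
    (s : ℝ → ℝ) (a b : ℝ) (ha : a < 0) (hb : 0 < b)
    (hdiff : ∀ t ∈ Ioo a b, DifferentiableAt ℝ s t ∧ DifferentiableAt ℝ (deriv s) t)
    (heq : ∀ t ∈ Ioo a b, deriv (deriv s) t = 6 * (s t) ^ 2 + 6 * t)
    (h0 : s 0 = 0) (h0' : deriv s 0 = 0) :
    ∀ t ∈ Ioo a b, 0 < t → deriv s t > 3 * t ^ 2 ∧ s t > t ^ 3 :=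
  painleve_initial_growth_general s a b ha hdiff heq h0 h0'
end

section
/- Let s satisfy s''(t) = 6 s(t)^2 + 6 t on an interval I containing 0 with s(0) = s'(0) = 0. Then the function t ↦ s'(t)^2 - 4 s(t)^3 is strictly increasing on I ∩ [0, ∞); consequently s'(t) > 2 s(t)^{3/2} for all t > 0 in I. -/
/-!
The energy `E = s' ^ 2 - 4 s ^ 3` satisfies `E' = 2 s' (s'' - 6 s ^ 2) = 12 t s'`. Since
`s'' = 6 s ^ 2 + 6 t > 0` for `t > 0` and `s(0) = s'(0) = 0`, both `s'` and `s` are positive on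
`(0, b)`, so `E` increases strictly from `E(0) = 0`. Hence `s' ^ 2 > 4 s ^ 3 = (2 s ^ (3/2)) ^ 2`
with `s' > 0`.
-/

open Set

theorem strictMonoOn_Ico_of_hasDerivAt_pos {f f' : ℝ → ℝ} {c b : ℝ}
    (hf : ∀ t ∈ Ico c b, HasDerivAt f (f' t) t) (hpos : ∀ t ∈ Ioo c b, 0 < f' t) :
    StrictMonoOn f (Ico c b) := by
  refine strictMonoOn_of_deriv_pos (convex_Ico c b)
    (fun t ht => (hf t ht).continuousAt.continuousWithinAt) fun t ht => ?_
  rw [interior_Ico] at ht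
  rw [(hf t (Ioo_subset_Ico_self ht)).deriv]
  exact hpos t ht

theorem pos_of_strictMonoOn_Ico {f : ℝ → ℝ} {c b t : ℝ} (hf : StrictMonoOn f (Ico c b))
    (hc : f c = 0) (ht : t ∈ Ioo c b) : 0 < f t :=
  hc ▸ hf (left_mem_Ico.2 (ht.1.trans ht.2)) (Ioo_subset_Ico_self ht) ht.1

theorem hasDerivAt_energy {s u : ℝ → ℝ} {v t : ℝ} (hs : HasDerivAt s (u t) t)
    (hu : HasDerivAt u v t) :
    HasDerivAt (fun t => u t ^ 2 - 4 * s t ^ 3) (2 * u t * (v - 6 * s t ^ 2)) t := by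
  refine ((hu.fun_pow 2).sub ((hs.fun_pow 3).const_mul 4)).congr_deriv ?_
  push_cast
  ring

theorem two_mul_rpow_three_halves_lt {x y : ℝ} (hx : 0 ≤ x) (hy : 0 ≤ y) (h : 4 * x ^ 3 < y ^ 2) :
    2 * x ^ ((3 : ℝ) / 2) < y := by
  have hsq : (2 * x ^ ((3 : ℝ) / 2)) ^ 2 = 4 * x ^ 3 := by
    rw [mul_pow, ← Real.rpow_natCast (x ^ ((3 : ℝ) / 2)) 2, ← Real.rpow_mul hx]
    norm_num
  exact lt_of_pow_lt_pow_left₀ 2 hy (hsq ▸ h)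

section PainleveI

variable {s u : ℝ → ℝ} {b : ℝ} (hs : ∀ t ∈ Ico 0 b, HasDerivAt s (u t) t)
  (hu : ∀ t ∈ Ico 0 b, HasDerivAt u (6 * s t ^ 2 + 6 * t) t) (h0 : s 0 = 0) (hu0 : u 0 = 0)
include hu hu0

theorem painleve_deriv_pos {t : ℝ} (ht : t ∈ Ioo 0 b) : 0 < u t := by
  refine pos_of_strictMonoOn_Ico (strictMonoOn_Ico_of_hasDerivAt_pos hu fun τ hτ => ?_) hu0 ht
  nlinarith [sq_nonneg (s τ), hτ.1]

include hs h0

theorem painleve_pos {t : ℝ} (ht : t ∈ Ioo 0 b) : 0 < s t :=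
  pos_of_strictMonoOn_Ico
    (strictMonoOn_Ico_of_hasDerivAt_pos hs fun _ hτ => painleve_deriv_pos hu hu0 hτ) h0 ht

omit h0 in
theorem painleve_energy_strictMonoOn :
    StrictMonoOn (fun t => u t ^ 2 - 4 * s t ^ 3) (Ico 0 b) := by
  refine strictMonoOn_Ico_of_hasDerivAt_pos
    (fun t ht => hasDerivAt_energy (hs t ht) (hu t ht)) fun t ht => ?_
  have hu_pos := painleve_deriv_pos hu hu0 ht
  have ht_pos := ht.1
  nlinarith

theorem painleve_rpow_lt_deriv {t : ℝ} (ht : t ∈ Ioo 0 b) : 2 * s t ^ ((3 : ℝ) / 2) < u t := by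
  have hE := pos_of_strictMonoOn_Ico (painleve_energy_strictMonoOn hs hu hu0)
    (by simp [h0, hu0]) ht
  exact two_mul_rpow_three_halves_lt (painleve_pos hs hu h0 hu0 ht).le
    (painleve_deriv_pos hu hu0 ht).le (sub_pos.1 hE)

end PainleveI

theorem painleve_energy_monotone_general
    (s : ℝ → ℝ) (a b : ℝ) (ha : a < 0)
    (hdiff : ∀ t ∈ Ioo a b, DifferentiableAt ℝ s t ∧ DifferentiableAt ℝ (deriv s) t)
    (heq : ∀ t ∈ Ioo a b, deriv (deriv s) t = 6 * (s t) ^ 2 + 6 * t)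
    (h0 : s 0 = 0) (h0' : deriv s 0 = 0) :
    StrictMonoOn (fun t => (deriv s t) ^ 2 - 4 * (s t) ^ 3) (Ioo a b ∩ Ici 0) ∧
    ∀ t ∈ Ioo a b, 0 < t → deriv s t > 2 * (s t) ^ ((3 : ℝ) / 2) := by
  have hsub : Ico 0 b ⊆ Ioo a b := fun t ht => ⟨ha.trans_le ht.1, ht.2⟩
  have hs : ∀ t ∈ Ico 0 b, HasDerivAt s (deriv s t) t := fun t ht =>
    (hdiff t (hsub ht)).1.hasDerivAt
  have hu : ∀ t ∈ Ico 0 b, HasDerivAt (deriv s) (6 * s t ^ 2 + 6 * t) t := fun t ht =>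
    heq t (hsub ht) ▸ (hdiff t (hsub ht)).2.hasDerivAt
  have hset : Ioo a b ∩ Ici 0 = Ico 0 b := by
    ext t
    exact ⟨fun ⟨ht, h⟩ => ⟨h, ht.2⟩, fun ht => ⟨hsub ht, ht.1⟩⟩
  exact ⟨hset ▸ painleve_energy_strictMonoOn hs hu h0', fun t ht htpos =>
    painleve_rpow_lt_deriv hs hu h0 h0' ⟨htpos, ht.2⟩⟩

theorem painleve_energy_monotone
    (s : ℝ → ℝ) (a b : ℝ) (ha : a < 0) (hb : 0 < b)
    (hdiff : ∀ t ∈ Ioo a b, DifferentiableAt ℝ s t ∧ DifferentiableAt ℝ (deriv s) t)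
    (heq : ∀ t ∈ Ioo a b, deriv (deriv s) t = 6 * (s t) ^ 2 + 6 * t)
    (h0 : s 0 = 0) (h0' : deriv s 0 = 0) :
    StrictMonoOn (fun t => (deriv s t) ^ 2 - 4 * (s t) ^ 3) (Ioo a b ∩ Ici 0) ∧
    ∀ t ∈ Ioo a b, 0 < t → deriv s t > 2 * (s t) ^ ((3 : ℝ) / 2) :=
  painleve_energy_monotone_general s a b ha hdiff heq h0 h0'
end

section
/- Let s satisfy s''(t) = 6 s(t)^2 + 6 t on I ∋ 0 with s(0) = s'(0) = 0, and let τ > 0 be in I. Then every t in I with t > τ satisfies t < τ + s(τ)^{-1/2}; that is, τ + s(τ)^{-1/2} does not lie in I. -/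
/-!
For `t > 0` the ODE forces `s'' > 0`, hence `s' > 0` and `s > 0`, and the energy `s'² - 4 s³`,
whose derivative is `12 t s'`, is positive. Thus `s' > 2 s^{3/2}`, i.e. `(s^{-1/2})' < -1`, so
`t ↦ s(t)^{-1/2} + t` strictly decreases for `t > 0`, and for `τ < t` in `I` we get
`t < s(t)^{-1/2} + t < s(τ)^{-1/2} + τ`.
-/

open Set

lemma pos_of_map_zero_of_deriv_pos {f : ℝ → ℝ} {b : ℝ}
    (hf : ∀ t ∈ Ico 0 b, DifferentiableAt ℝ f t) (hf' : ∀ t ∈ Ioo 0 b, 0 < deriv f t)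
    (h0 : f 0 = 0) : ∀ t ∈ Ioo 0 b, 0 < f t := by
  intro t ht
  have hmono : StrictMonoOn f (Ico 0 b) :=
    strictMonoOn_of_deriv_pos (convex_Ico 0 b)
      (fun x hx ↦ (hf x hx).continuousAt.continuousWithinAt) (by rwa [interior_Ico])
  simpa [h0] using hmono (left_mem_Ico.2 (ht.1.trans ht.2)) (Ioo_subset_Ico_self ht) ht.1

section Painleve

variable {s : ℝ → ℝ} {b : ℝ}

lemma deriv_pos_of_painleve
    (hdiff : ∀ t ∈ Ico 0 b, DifferentiableAt ℝ s t ∧ DifferentiableAt ℝ (deriv s) t)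
    (heq : ∀ t ∈ Ico 0 b, deriv (deriv s) t = 6 * s t ^ 2 + 6 * t) (h0' : deriv s 0 = 0) :
    ∀ t ∈ Ioo 0 b, 0 < deriv s t :=
  pos_of_map_zero_of_deriv_pos (fun t ht ↦ (hdiff t ht).2)
    (fun t ht ↦ by rw [heq t (Ioo_subset_Ico_self ht)]; nlinarith [ht.1, sq_nonneg (s t)]) h0'

lemma pos_of_painleve
    (hdiff : ∀ t ∈ Ico 0 b, DifferentiableAt ℝ s t ∧ DifferentiableAt ℝ (deriv s) t)
    (heq : ∀ t ∈ Ico 0 b, deriv (deriv s) t = 6 * s t ^ 2 + 6 * t)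
    (h0 : s 0 = 0) (h0' : deriv s 0 = 0) :
    ∀ t ∈ Ioo 0 b, 0 < s t :=
  pos_of_map_zero_of_deriv_pos (fun t ht ↦ (hdiff t ht).1) (deriv_pos_of_painleve hdiff heq h0') h0

lemma hasDerivAt_painleve_energy {t : ℝ}
    (hdiff : DifferentiableAt ℝ s t ∧ DifferentiableAt ℝ (deriv s) t)
    (heq : deriv (deriv s) t = 6 * s t ^ 2 + 6 * t) :
    HasDerivAt (fun t ↦ deriv s t ^ 2 - 4 * s t ^ 3) (12 * t * deriv s t) t := by
  refine ((hdiff.2.hasDerivAt.pow 2).sub ((hdiff.1.hasDerivAt.pow 3).const_mul 4)).congr_deriv ?_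
  rw [heq]
  norm_num
  ring

lemma four_mul_pow_three_lt_deriv_sq_of_painleve
    (hdiff : ∀ t ∈ Ico 0 b, DifferentiableAt ℝ s t ∧ DifferentiableAt ℝ (deriv s) t)
    (heq : ∀ t ∈ Ico 0 b, deriv (deriv s) t = 6 * s t ^ 2 + 6 * t)
    (h0 : s 0 = 0) (h0' : deriv s 0 = 0) :
    ∀ t ∈ Ioo 0 b, 4 * s t ^ 3 < deriv s t ^ 2 := by
  have henergy := pos_of_map_zero_of_deriv_pos (f := fun t ↦ deriv s t ^ 2 - 4 * s t ^ 3)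
    (fun t ht ↦ (hasDerivAt_painleve_energy (hdiff t ht) (heq t ht)).differentiableAt)
    (fun t ht ↦ by
      have hIco := Ioo_subset_Ico_self ht
      rw [(hasDerivAt_painleve_energy (hdiff t hIco) (heq t hIco)).deriv]
      have := deriv_pos_of_painleve hdiff heq h0' t ht
      have := ht.1
      positivity)
    (by simp [h0, h0'])
  exact fun t ht ↦ sub_pos.1 (henergy t ht)

lemma two_mul_rpow_lt_deriv_of_painleve
    (hdiff : ∀ t ∈ Ico 0 b, DifferentiableAt ℝ s t ∧ DifferentiableAt ℝ (deriv s) t)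
    (heq : ∀ t ∈ Ico 0 b, deriv (deriv s) t = 6 * s t ^ 2 + 6 * t)
    (h0 : s 0 = 0) (h0' : deriv s 0 = 0) :
    ∀ t ∈ Ioo 0 b, 2 * s t ^ (3 / 2 : ℝ) < deriv s t := by
  intro t ht
  have hsq : (2 * s t ^ (3 / 2 : ℝ)) ^ 2 = 4 * s t ^ 3 := by
    rw [mul_pow, ← Real.rpow_mul_natCast (pos_of_painleve hdiff heq h0 h0' t ht).le]
    norm_num
  refine lt_of_pow_lt_pow_left₀ 2 (deriv_pos_of_painleve hdiff heq h0' t ht).le ?_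
  rw [hsq]
  exact four_mul_pow_three_lt_deriv_sq_of_painleve hdiff heq h0 h0' t ht

lemma strictAntiOn_rpow_neg_half_add_of_painleve
    (hdiff : ∀ t ∈ Ico 0 b, DifferentiableAt ℝ s t ∧ DifferentiableAt ℝ (deriv s) t)
    (heq : ∀ t ∈ Ico 0 b, deriv (deriv s) t = 6 * s t ^ 2 + 6 * t)
    (h0 : s 0 = 0) (h0' : deriv s 0 = 0) :
    StrictAntiOn (fun t ↦ s t ^ (-(1 : ℝ) / 2) + t) (Ioo 0 b) := by
  have hderiv : ∀ t ∈ Ioo 0 b, HasDerivAt (fun t ↦ s t ^ (-(1 : ℝ) / 2) + t)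
      (deriv s t * (-(1 : ℝ) / 2) * s t ^ (-(1 : ℝ) / 2 - 1) + 1) t := fun t ht ↦
    ((hdiff t (Ioo_subset_Ico_self ht)).1.hasDerivAt.rpow_const
      (Or.inl (pos_of_painleve hdiff heq h0 h0' t ht).ne')).add (hasDerivAt_id t)
  refine strictAntiOn_of_deriv_neg (convex_Ioo 0 b)
    (fun t ht ↦ (hderiv t ht).continuousAt.continuousWithinAt) fun t ht ↦ ?_
  rw [interior_Ioo] at ht
  have hs := pos_of_painleve hdiff heq h0 h0' t ht
  have hpow : 0 < s t ^ (3 / 2 : ℝ) := Real.rpow_pos_of_pos hs _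
  have hratio : 2 < deriv s t / s t ^ (3 / 2 : ℝ) :=
    (lt_div_iff₀ hpow).2 (two_mul_rpow_lt_deriv_of_painleve hdiff heq h0 h0' t ht)
  rw [(hderiv t ht).deriv, show -(1 : ℝ) / 2 - 1 = -(3 / 2) by norm_num, Real.rpow_neg hs.le]
  rw [div_eq_mul_inv] at hratio
  linarith

lemma lt_add_rpow_neg_half_of_painleve
    (hdiff : ∀ t ∈ Ico 0 b, DifferentiableAt ℝ s t ∧ DifferentiableAt ℝ (deriv s) t)
    (heq : ∀ t ∈ Ico 0 b, deriv (deriv s) t = 6 * s t ^ 2 + 6 * t)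
    (h0 : s 0 = 0) (h0' : deriv s 0 = 0) {τ t : ℝ} (hτ : 0 < τ) (hτt : τ < t) (htb : t < b) :
    t < τ + s τ ^ (-(1 : ℝ) / 2) := by
  have ht : t ∈ Ioo 0 b := ⟨hτ.trans hτt, htb⟩
  have hanti := strictAntiOn_rpow_neg_half_add_of_painleve hdiff heq h0 h0'
    ⟨hτ, hτt.trans htb⟩ ht hτt
  have := Real.rpow_pos_of_pos (pos_of_painleve hdiff heq h0 h0' t ht) (-(1 : ℝ) / 2)
  simp only at hanti
  linarith

end Painleve

theorem painleve_blowup_upper_bound_general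
    (s : ℝ → ℝ) (a b : ℝ) (ha : a < 0)
    (hdiff : ∀ t ∈ Ioo a b, DifferentiableAt ℝ s t ∧ DifferentiableAt ℝ (deriv s) t)
    (heq : ∀ t ∈ Ioo a b, deriv (deriv s) t = 6 * (s t) ^ 2 + 6 * t)
    (h0 : s 0 = 0) (h0' : deriv s 0 = 0)
    (τ : ℝ) (hτ : τ ∈ Ioo a b) (hτpos : 0 < τ) :
    (∀ t ∈ Ioo a b, τ < t → t < τ + (s τ) ^ (-(1 : ℝ) / 2)) ∧
    τ + (s τ) ^ (-(1 : ℝ) / 2) ∉ Ioo a b := by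
  have hsub : Ico 0 b ⊆ Ioo a b := fun t ht ↦ ⟨ha.trans_le ht.1, ht.2⟩
  have hdiff₀ := fun t (ht : t ∈ Ico 0 b) ↦ hdiff t (hsub ht)
  have heq₀ := fun t (ht : t ∈ Ico 0 b) ↦ heq t (hsub ht)
  have hbound : ∀ t ∈ Ioo a b, τ < t → t < τ + (s τ) ^ (-(1 : ℝ) / 2) := fun t ht hτt ↦
    lt_add_rpow_neg_half_of_painleve hdiff₀ heq₀ h0 h0' hτpos hτt ht.2
  refine ⟨hbound, fun hmem ↦ ?_⟩
  have hsτ : 0 < s τ := pos_of_painleve hdiff₀ heq₀ h0 h0' τ ⟨hτpos, hτ.2⟩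
  have := Real.rpow_pos_of_pos hsτ (-(1 : ℝ) / 2)
  exact (hbound _ hmem (by linarith)).false

theorem painleve_blowup_upper_bound
    (s : ℝ → ℝ) (a b : ℝ) (ha : a < 0) (hb : 0 < b)
    (hdiff : ∀ t ∈ Ioo a b, DifferentiableAt ℝ s t ∧ DifferentiableAt ℝ (deriv s) t)
    (heq : ∀ t ∈ Ioo a b, deriv (deriv s) t = 6 * (s t) ^ 2 + 6 * t)
    (h0 : s 0 = 0) (h0' : deriv s 0 = 0)
    (τ : ℝ) (hτ : τ ∈ Ioo a b) (hτpos : 0 < τ) :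
    (∀ t ∈ Ioo a b, τ < t → t < τ + (s τ) ^ (-(1 : ℝ) / 2)) ∧
    τ + (s τ) ^ (-(1 : ℝ) / 2) ∉ Ioo a b :=
  painleve_blowup_upper_bound_general s a b ha hdiff heq h0 h0' τ hτ hτpos
end

section
/- Suppose a differentiable function s : [τ, T) → ℝ satisfies s(t) > 0 and s'(t) > 2 s(t)^{3/2} for all t in [τ, T). Then for all t in (τ, T), s(t)^{-1/2} < s(τ)^{-1/2} - (t - τ); in particular T ≤ τ + s(τ)^{-1/2}. -/
open Set

/-! If `s' > k s^(1+a)` with `a > 0`, then `u = s^(-a)` satisfies `u' = -a s' s^(-a-1) < -a k`,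
so `u(t) + a k t` is strictly decreasing. For `a = 1/2`, `k = 2` this gives
`s(t)^(-1/2) < s(τ)^(-1/2) - (t - τ)`, and positivity of the left side bounds `T`. -/

theorem mul_neg_mul_rpow_add_mul_neg {a k x d : ℝ} (ha : 0 < a) (hx : 0 < x)
    (hd : k * x ^ (1 + a) < d) : d * (-a) * x ^ (-a - 1) + a * k < 0 := by
  have hinv : x ^ (1 + a) * x ^ (-a - 1) = 1 := by
    rw [← Real.rpow_add hx]
    ring_nf
    exact Real.rpow_zero x
  have hk : k < d * x ^ (-a - 1) := by
    calc k = k * x ^ (1 + a) * x ^ (-a - 1) := by rw [mul_assoc, hinv, mul_one]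
      _ < d * x ^ (-a - 1) := mul_lt_mul_of_pos_right hd (Real.rpow_pos_of_pos hx _)
  nlinarith

theorem strictAntiOn_rpow_neg_add_mul {s : ℝ → ℝ} {D : Set ℝ} {a k : ℝ} (hD : Convex ℝ D)
    (ha : 0 < a) (hdiff : ∀ t ∈ D, DifferentiableAt ℝ s t) (hpos : ∀ t ∈ D, 0 < s t)
    (hineq : ∀ t ∈ D, k * s t ^ (1 + a) < deriv s t) :
    StrictAntiOn (fun t => s t ^ (-a) + a * k * t) D := by
  have hderiv : ∀ t ∈ D, HasDerivAt (fun t => s t ^ (-a) + a * k * t)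
      (deriv s t * (-a) * s t ^ (-a - 1) + a * k) t := fun t ht =>
    ((hdiff t ht).hasDerivAt.rpow_const (Or.inl (hpos t ht).ne')).add
      ((hasDerivAt_id t).const_mul (a * k) |>.congr_deriv (mul_one _))
  refine strictAntiOn_of_hasDerivWithinAt_neg hD
    (fun t ht => (hderiv t ht).continuousAt.continuousWithinAt)
    (fun t ht => (hderiv t (interior_subset ht)).hasDerivWithinAt)
    (fun t ht => mul_neg_mul_rpow_add_mul_neg ha (hpos t (interior_subset ht))
      (hineq t (interior_subset ht)))

theorem blowup_from_differential_inequality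
    (s : ℝ → ℝ) (τ T : ℝ) (hτT : τ < T)
    (hdiff : ∀ t ∈ Ico τ T, DifferentiableAt ℝ s t)
    (hpos : ∀ t ∈ Ico τ T, 0 < s t)
    (hineq : ∀ t ∈ Ico τ T, deriv s t > 2 * (s t) ^ ((3 : ℝ) / 2)) :
    (∀ t ∈ Ioo τ T, (s t) ^ (-(1 : ℝ) / 2) < (s τ) ^ (-(1 : ℝ) / 2) - (t - τ)) ∧
    T ≤ τ + (s τ) ^ (-(1 : ℝ) / 2) := by
  have hanti : StrictAntiOn (fun t => s t ^ (-(1 / 2 : ℝ)) + 1 / 2 * 2 * t) (Ico τ T) :=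
    strictAntiOn_rpow_neg_add_mul (convex_Ico τ T) one_half_pos hdiff hpos fun t ht => by
      norm_num; exact hineq t ht
  have hbound : ∀ t ∈ Ioo τ T, s t ^ (-(1 : ℝ) / 2) < s τ ^ (-(1 : ℝ) / 2) - (t - τ) :=
    fun t ht => by
      have := hanti (left_mem_Ico.2 hτT) (Ioo_subset_Ico_self ht) ht.1
      rw [neg_div]
      linarith
  refine ⟨hbound, le_of_forall_lt_imp_le_of_dense fun t htT => ?_⟩
  rcases le_or_gt t τ with htτ | hτt
  · linarith [Real.rpow_nonneg (hpos τ (left_mem_Ico.2 hτT)).le (-(1 : ℝ) / 2)]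
  · linarith [hbound t ⟨hτt, htT⟩, Real.rpow_nonneg (hpos t ⟨hτt.le, htT⟩).le (-(1 : ℝ) / 2)]
end

section
/- Let s satisfy s''(t) = 6 s(t)^2 + 6 t on I ∩ [0,∞) with s(0) = s'(0) = 0 and s(t) > t^3 for t > 0 in I. Then for all t > 0 in I, s'(t)^2 < 4 s(t)^3 + 9 s(t)^{4/3}. -/
open Set

theorem painleve_deriv_squared_bound
    (s : ℝ → ℝ) (a b : ℝ) (ha : a < 0) (hb : 0 < b)
    (hdiff : ∀ t ∈ Ioo a b, DifferentiableAt ℝ s t ∧ DifferentiableAt ℝ (deriv s) t)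
    (heq : ∀ t ∈ Ioo a b, deriv (deriv s) t = 6 * (s t) ^ 2 + 6 * t)
    (h0 : s 0 = 0) (h0' : deriv s 0 = 0)
    (hlb : ∀ t ∈ Ioo a b, 0 < t → s t > t ^ 3) :
    ∀ t ∈ Ioo a b, 0 < t → (deriv s t) ^ 2 < 4 * (s t) ^ 3 + 9 * (s t) ^ ((4 : ℝ) / 3) := by
  intro t ht htpos
  have hsub : ∀ x, x ∈ Icc (0:ℝ) t → x ∈ Ioo a b := by
    intro x hx
    exact ⟨lt_of_lt_of_le ha hx.1, lt_of_le_of_lt hx.2 ht.2⟩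
  -- continuity of s and deriv s on Icc 0 t
  have hcs : ContinuousOn s (Icc 0 t) := fun x hx =>
    ((hdiff x (hsub x hx)).1.continuousAt).continuousWithinAt
  have hcs' : ContinuousOn (deriv s) (Icc 0 t) := fun x hx =>
    ((hdiff x (hsub x hx)).2.continuousAt).continuousWithinAt
  -- deriv s is positive on (0, t]
  have hspos : ∀ x ∈ Ioo a b, 0 < x → 0 < s x := by
    intro x hx hxpos
    have := hlb x hx hxpos
    nlinarith [pow_pos hxpos 3]
  have hderivpos : ∀ x ∈ Ioo a b, 0 < x → 0 < deriv s x := by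
    intro x hx hxpos
    have hsubx : Icc (0:ℝ) x ⊆ Ioo a b := by
      intro y hy
      exact ⟨lt_of_lt_of_le ha hy.1, lt_of_le_of_lt hy.2 hx.2⟩
    have hcont : ContinuousOn (deriv s) (Icc 0 x) := fun y hy =>
      ((hdiff y (hsubx hy)).2.continuousAt).continuousWithinAt
    have hmono : StrictMonoOn (deriv s) (Icc 0 x) := by
      apply strictMonoOn_of_deriv_pos (convex_Icc 0 x) hcont
      intro y hy
      rw [interior_Icc] at hy
      have hyab : y ∈ Ioo a b := hsubx ⟨le_of_lt hy.1, le_of_lt hy.2⟩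
      rw [heq y hyab]
      nlinarith [sq_nonneg (s y), hy.1]
    have := hmono (left_mem_Icc.mpr (le_of_lt hxpos)) (right_mem_Icc.mpr (le_of_lt hxpos)) hxpos
    rwa [h0'] at this
  -- energy function
  set F : ℝ → ℝ := fun x => (deriv s x) ^ 2 - 4 * (s x) ^ 3 - 9 * (s x) ^ ((4:ℝ)/3) with hF
  have hFcont : ContinuousOn F (Icc 0 t) := by
    apply ContinuousOn.sub
    apply ContinuousOn.sub
    · exact hcs'.pow 2
    · exact (continuousOn_const.mul (hcs.pow 3))
    · exact continuousOn_const.mul (hcs.rpow_const (fun x hx => Or.inr (by norm_num)))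
  have hFanti : StrictAntiOn F (Icc 0 t) := by
    apply strictAntiOn_of_deriv_neg (convex_Icc 0 t) hFcont
    intro x hx
    rw [interior_Icc] at hx
    have hxab : x ∈ Ioo a b := hsub x ⟨le_of_lt hx.1, le_of_lt hx.2⟩
    have hsx : 0 < s x := hspos x hxab hx.1
    have hs'x : 0 < deriv s x := hderivpos x hxab hx.1
    have h1 : HasDerivAt (deriv s) (deriv (deriv s) x) x := (hdiff x hxab).2.hasDerivAt
    have h2 : HasDerivAt s (deriv s x) x := (hdiff x hxab).1.hasDerivAt
    have hsq : HasDerivAt (fun y => (deriv s y) ^ 2)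
        ((2:ℕ) * (deriv s x) ^ 1 * deriv (deriv s) x) x := h1.pow 2
    have hcube : HasDerivAt (fun y => 4 * (s y) ^ 3)
        (4 * ((3:ℕ) * (s x) ^ 2 * deriv s x)) x := ((h2.pow 3).const_mul 4)
    have hrp : HasDerivAt (fun y => 9 * (s y) ^ ((4:ℝ)/3))
        (9 * (deriv s x * ((4:ℝ)/3) * (s x) ^ ((4:ℝ)/3 - 1))) x :=
      (h2.rpow_const (Or.inl (ne_of_gt hsx))).const_mul 9
    have hFd : HasDerivAt F
        ((2:ℕ) * (deriv s x) ^ 1 * deriv (deriv s) x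
          - 4 * ((3:ℕ) * (s x) ^ 2 * deriv s x)
          - 9 * (deriv s x * ((4:ℝ)/3) * (s x) ^ ((4:ℝ)/3 - 1))) x :=
      (hsq.sub hcube).sub hrp
    rw [hFd.deriv]
    -- key inequality: x < s x ^ (1/3)
    have hexp : (4:ℝ)/3 - 1 = 1/3 := by norm_num
    rw [hexp, heq x hxab]
    have hcube_eq : ((s x) ^ ((1:ℝ)/3)) ^ 3 = s x := by
      rw [← Real.rpow_natCast ((s x) ^ ((1:ℝ)/3)) 3, ← Real.rpow_mul (le_of_lt hsx)]
      norm_num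
    have hkey : x < (s x) ^ ((1:ℝ)/3) := by
      by_contra hcon
      push_neg at hcon
      have h3 : ((s x) ^ ((1:ℝ)/3)) ^ 3 ≤ x ^ 3 :=
        pow_le_pow_left₀ (Real.rpow_nonneg (le_of_lt hsx) _) hcon 3
      rw [hcube_eq] at h3
      exact absurd (hlb x hxab hx.1) (not_lt.mpr h3)
    nlinarith [hs'x, hkey]
  have h0mem : (0:ℝ) ∈ Icc (0:ℝ) t := left_mem_Icc.mpr (le_of_lt htpos)
  have htmem : t ∈ Icc (0:ℝ) t := right_mem_Icc.mpr (le_of_lt htpos)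
  have := hFanti h0mem htmem htpos
  have hF0 : F 0 = 0 := by
    simp only [hF, h0, h0']
    rw [Real.zero_rpow (by norm_num : ((4:ℝ)/3) ≠ 0)]
    ring
  rw [hF0] at this
  simp only [hF] at this
  linarith
end

section
/- The improper integral ∫₀^∞ ds / (2 s^{3/2} + 3 s^{2/3}) is strictly greater than √(3/2) · arctan √(2/3) + (2/3) · log (5/2). -/
/-!
Split the integral at `s = 1`. On `(0, 1)` the integrand strictly exceeds
`(2 s^{4/3} + 3 s^{2/3})⁻¹`, because `s^{3/2} < s^{4/3}` there; the substitution `s = r³` turns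
this into `3 / (2 r² + 3)`, with antiderivative `√(3/2) arctan (√(2/3) s^{1/3})`. On `(1, ∞)` it
dominates `(2 s^{3/2} + 3 s)⁻¹`, because `s^{2/3} ≤ s` there; the substitution `s = r²` turns this
into `2 / (r (2 r + 3))`, with antiderivative `(1/3) log s - (2/3) log (2 √s + 3)`, which tends to
`-(2/3) log 2` at infinity.
-/

open MeasureTheory Real Set Filter

theorem integrableOn_Ioi_inv_add_rpow {a b p q : ℝ} (ha : 0 < a) (hb : 0 < b) (hq : q < 1)
    (hp : 1 < p) : IntegrableOn (fun s : ℝ => (a * s ^ p + b * s ^ q)⁻¹) (Ioi 0) := by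
  have hmeas : AEStronglyMeasurable (fun s : ℝ => (a * s ^ p + b * s ^ q)⁻¹) := by fun_prop
  rw [← Ioc_union_Ioi_eq_Ioi zero_le_one, integrableOn_union]
  constructor
  · have hbound : IntegrableOn (fun s : ℝ => b⁻¹ * s ^ (-q)) (Ioc 0 1) :=
      ((intervalIntegrable_iff_integrableOn_Ioc_of_le zero_le_one).1
        (intervalIntegral.intervalIntegrable_rpow' (by linarith))).const_mul _
    refine hbound.mono' hmeas.restrict ((ae_restrict_iff' measurableSet_Ioc).2 (ae_of_all _ ?_))
    rintro s ⟨hs, -⟩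
    rw [norm_inv, norm_of_nonneg (by positivity), rpow_neg hs.le, ← mul_inv]
    exact inv_anti₀ (by positivity) (le_add_of_nonneg_left (by positivity))
  · have hbound : IntegrableOn (fun s : ℝ => a⁻¹ * s ^ (-p)) (Ioi 1) :=
      (integrableOn_Ioi_rpow_of_lt (by linarith) zero_lt_one).const_mul _
    refine hbound.mono' hmeas.restrict ((ae_restrict_iff' measurableSet_Ioi).2 (ae_of_all _ ?_))
    intro s (hs : 1 < s)
    have hs₀ : 0 < s := zero_lt_one.trans hs
    rw [norm_inv, norm_of_nonneg (by positivity), rpow_neg hs₀.le, ← mul_inv]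
    exact inv_anti₀ (by positivity) (le_add_of_nonneg_right (by positivity))

theorem intervalIntegral.integral_lt_integral_of_forall_Ioo_lt {f g : ℝ → ℝ} {a b : ℝ}
    (hab : a < b) (hf : IntervalIntegrable f volume a b) (hg : IntervalIntegrable g volume a b)
    (hlt : ∀ x ∈ Ioo a b, f x < g x) : ∫ x in a..b, f x < ∫ x in a..b, g x := by
  refine integral_lt_integral_of_ae_le_of_measure_setOfPred_lt_ne_zero hab.le hf hg ?_ ?_
  · rw [Measure.restrict_congr_set Ioo_ae_eq_Ioc.symm]
    exact (ae_restrict_iff' measurableSet_Ioo).2 (ae_of_all _ fun x hx => (hlt x hx).le)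
  · refine (lt_of_lt_of_le ?_ (Measure.le_restrict_apply _ _)).ne'
    refine lt_of_lt_of_le ?_ (measure_mono fun x hx => ⟨hlt x hx, Ioo_subset_Ioc_self hx⟩)
    simpa [Real.volume_Ioo] using hab

theorem intervalIntegrable_inv_two_rpow_add_three_rpow :
    IntervalIntegrable (fun x : ℝ => (2 * x ^ (4 / 3 : ℝ) + 3 * x ^ (2 / 3 : ℝ))⁻¹) volume 0 1 :=
  (intervalIntegrable_iff_integrableOn_Ioc_of_le zero_le_one).2
    ((integrableOn_Ioi_inv_add_rpow two_pos three_pos (by norm_num) (by norm_num)).mono_set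
      Ioc_subset_Ioi_self)

theorem hasDerivAt_sqrt_mul_arctan_rpow {s : ℝ} (hs : 0 < s) :
    HasDerivAt (fun x : ℝ => √(3 / 2) * arctan (√(2 / 3) * x ^ (1 / 3 : ℝ)))
      ((2 * s ^ (4 / 3 : ℝ) + 3 * s ^ (2 / 3 : ℝ))⁻¹) s := by
  have hcbrt : HasDerivAt (fun x : ℝ => x ^ (1 / 3 : ℝ)) (1 / 3 * s ^ (1 / 3 - 1 : ℝ)) s :=
    hasDerivAt_rpow_const (Or.inl hs.ne')
  refine (((hcbrt.const_mul √(2 / 3)).arctan).const_mul √(3 / 2)).congr_deriv ?_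
  set r := s ^ (1 / 3 : ℝ)
  have hr : 0 < r := rpow_pos_of_pos hs _
  have hpow (k : ℕ) : s ^ ((k : ℝ) / 3) = r ^ k := by
    rw [← rpow_natCast, ← rpow_mul hs.le]; ring_nf
  have hneg : s ^ (1 / 3 - 1 : ℝ) = (r ^ 2)⁻¹ := by
    rw [← hpow 2, ← rpow_neg hs.le]; norm_num
  have h2 := hpow 2
  have h4 := hpow 4
  push_cast at h2 h4
  have hsqrt : √(3 / 2) * √(2 / 3) = 1 := by
    rw [← sqrt_mul (by norm_num)]; norm_num
  have hsq : √(2 / 3) ^ 2 = 2 / 3 := sq_sqrt (by norm_num)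
  rw [h2, h4, hneg, mul_pow, hsq]
  field_simp
  linear_combination (3 + 2 * r ^ 2) * hsqrt

theorem integral_inv_two_rpow_add_three_rpow_zero_one :
    ∫ x in (0 : ℝ)..1, (2 * x ^ (4 / 3 : ℝ) + 3 * x ^ (2 / 3 : ℝ))⁻¹ =
      √(3 / 2) * arctan √(2 / 3) := by
  have hcont : ContinuousOn (fun x : ℝ => √(3 / 2) * arctan (√(2 / 3) * x ^ (1 / 3 : ℝ)))
      (Icc 0 1) :=
    (continuous_const.mul (continuous_arctan.comp
      (continuous_const.mul (continuous_rpow_const (by norm_num))))).continuousOn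
  rw [intervalIntegral.integral_eq_sub_of_hasDerivAt_of_le zero_le_one hcont
    (fun x hx => hasDerivAt_sqrt_mul_arctan_rpow hx.1)
    intervalIntegrable_inv_two_rpow_add_three_rpow]
  simp

theorem hasDerivAt_log_sub_log_two_sqrt_add_three {s : ℝ} (hs : 0 < s) :
    HasDerivAt (fun x : ℝ => 1 / 3 * log x - 2 / 3 * log (2 * √x + 3))
      ((2 * s ^ (3 / 2 : ℝ) + 3 * s)⁻¹) s := by
  have hlin : HasDerivAt (fun x : ℝ => 2 * √x + 3) (2 * (1 / (2 * √s))) s :=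
    ((hasDerivAt_sqrt hs.ne').const_mul 2).add_const 3
  refine (((hasDerivAt_log hs.ne').const_mul (1 / 3)).sub
    ((hlin.log (by positivity)).const_mul (2 / 3))).congr_deriv ?_
  have h32 : s ^ (3 / 2 : ℝ) = √s ^ 3 := by
    rw [sqrt_eq_rpow, ← rpow_natCast, ← rpow_mul hs.le]; norm_num
  have hs_eq : s = √s ^ 2 := (sq_sqrt hs.le).symm
  have hr : 0 < √s := sqrt_pos.2 hs
  rw [h32]
  generalize √s = r at hs_eq hr ⊢
  subst hs_eq
  field_simp
  ring

theorem tendsto_log_sub_log_two_sqrt_add_three_atTop :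
    Tendsto (fun x : ℝ => 1 / 3 * log x - 2 / 3 * log (2 * √x + 3)) atTop
      (nhds (-(2 / 3) * log 2)) := by
  have hinv : Tendsto (fun x : ℝ => 3 / √x) atTop (nhds 0) :=
    tendsto_const_nhds.div_atTop tendsto_sqrt_atTop
  have hlim : Tendsto (fun x : ℝ => -(2 / 3) * log (2 + 3 / √x)) atTop
      (nhds (-(2 / 3) * log 2)) := by
    refine ((continuousAt_log (by norm_num)).tendsto.comp ?_).const_mul _
    simpa using hinv.const_add 2
  refine hlim.congr' ?_
  filter_upwards [eventually_gt_atTop 0] with x hx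
  have hr : 0 < √x := sqrt_pos.2 hx
  rw [show 2 * √x + 3 = √x * (2 + 3 / √x) by field_simp, log_mul hr.ne' (by positivity),
    log_sqrt hx.le]
  ring

theorem integral_Ioi_one_inv_two_rpow_add_three_mul :
    ∫ x in Ioi (1 : ℝ), (2 * x ^ (3 / 2 : ℝ) + 3 * x)⁻¹ = 2 / 3 * log (5 / 2) := by
  rw [integral_Ioi_of_hasDerivAt_of_nonneg'
    (fun x hx => hasDerivAt_log_sub_log_two_sqrt_add_three (zero_lt_one.trans_le hx))
    (fun x hx => ?_) tendsto_log_sub_log_two_sqrt_add_three_atTop]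
  · rw [log_div (by norm_num) (by norm_num)]
    norm_num
    ring
  · have : 0 < x := zero_lt_one.trans hx.out
    positivity

theorem inv_two_rpow_add_three_rpow_lt {s : ℝ} (hs₀ : 0 < s) (hs₁ : s < 1) :
    (2 * s ^ (4 / 3 : ℝ) + 3 * s ^ (2 / 3 : ℝ))⁻¹ <
      (2 * s ^ (3 / 2 : ℝ) + 3 * s ^ (2 / 3 : ℝ))⁻¹ := by
  have := rpow_lt_rpow_of_exponent_gt hs₀ hs₁ (by norm_num : (4 / 3 : ℝ) < 3 / 2)
  exact inv_strictAnti₀ (by positivity) (by linarith)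

theorem inv_two_rpow_add_three_mul_le {s : ℝ} (hs : 1 ≤ s) :
    (2 * s ^ (3 / 2 : ℝ) + 3 * s)⁻¹ ≤ (2 * s ^ (3 / 2 : ℝ) + 3 * s ^ (2 / 3 : ℝ))⁻¹ := by
  have : 0 < s := zero_lt_one.trans_le hs
  have := rpow_le_rpow_of_exponent_le hs (by norm_num : (2 / 3 : ℝ) ≤ 1)
  rw [rpow_one] at this
  exact inv_anti₀ (by positivity) (by linarith)

theorem blowup_time_integral_lower_bound :
    (∫ s in Set.Ioi (0 : ℝ), (2 * s ^ ((3 : ℝ) / 2) + 3 * s ^ ((2 : ℝ) / 3))⁻¹) >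
      Real.sqrt (3 / 2) * Real.arctan (Real.sqrt (2 / 3)) + (2 / 3) * Real.log (5 / 2) := by
  have hf := integrableOn_Ioi_inv_add_rpow (p := 3 / 2) (q := 2 / 3) two_pos three_pos
    (by norm_num) (by norm_num)
  have hf₀₁ := (intervalIntegrable_iff_integrableOn_Ioc_of_le zero_le_one).2
    (hf.mono_set Ioc_subset_Ioi_self)
  have hf₁ := hf.mono_set (Ioi_subset_Ioi zero_le_one)
  rw [gt_iff_lt, ← intervalIntegral.integral_interval_add_Ioi hf hf₁,
    ← integral_inv_two_rpow_add_three_rpow_zero_one, ← integral_Ioi_one_inv_two_rpow_add_three_mul]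
  refine add_lt_add_of_lt_of_le ?_ ?_
  · exact intervalIntegral.integral_lt_integral_of_forall_Ioo_lt one_pos
      intervalIntegrable_inv_two_rpow_add_three_rpow hf₀₁
      fun s hs => inv_two_rpow_add_three_rpow_lt hs.1 hs.2
  · refine integral_mono_of_nonneg ?_ hf₁ ?_ <;>
      refine (ae_restrict_iff' measurableSet_Ioi).2 (ae_of_all _ fun s (hs : 1 < s) => ?_)
    · have : 0 < s := zero_lt_one.trans hs
      positivity
    · exact inv_two_rpow_add_three_mul_le hs.le
end

section
/- Let s satisfy s''(t) = 6 t - 6 s(t)^2 on [0, ∞) with s(0) = s'(0) = 0. Then s(t) > 0 for all t > 0. -/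
/-!
Since `s(0) = s'(0) = 0`, we have `s(t)² = o(t)`, so `s'' = 6t - 6s² > 0` just to the right of `0`,
and hence `s > 0` there. If `s` vanished later, at a first zero `T`, then the energy
`E = s'² + 4s³ - 12ts`, whose derivative is `-12s`, would be strictly decreasing on `[0, T]`.
That would give `s'(T)² = E(T) < E(0) = 0`, which is impossible.
-/

open Set Filter Topology Asymptotics

theorem pos_of_deriv_pos_of_eq_zero {f : ℝ → ℝ} {a b : ℝ} (hf : ContinuousOn f (Icc a b))
    (hf' : ∀ x ∈ Ioo a b, 0 < deriv f x) (ha : f a = 0) : ∀ x ∈ Ioc a b, 0 < f x := by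
  intro x hx
  have hmono : StrictMonoOn f (Icc a b) :=
    strictMonoOn_of_deriv_pos (convex_Icc a b) hf (by rwa [interior_Icc])
  simpa [ha] using hmono (left_mem_Icc.2 (hx.1.le.trans hx.2)) (Ioc_subset_Icc_self hx) hx.1

theorem exists_first_zero {f : ℝ → ℝ} {a d b : ℝ} (had : a < d) (hdb : d ≤ b)
    (hf : ContinuousOn f (Icc d b)) (hpos : ∀ x ∈ Ioc a d, 0 < f x) (hb : f b ≤ 0) :
    ∃ c ∈ Ioc a b, f c = 0 ∧ ∀ x ∈ Ioo a c, 0 < f x := by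
  have hK : IsCompact (Icc d b ∩ f ⁻¹' Iic 0) :=
    isCompact_Icc.of_isClosed_subset
      (hf.preimage_isClosed_of_isClosed isClosed_Icc isClosed_Iic) inter_subset_left
  obtain ⟨c, ⟨hcI, hc⟩, hleast⟩ := hK.exists_isLeast ⟨b, ⟨hdb, le_rfl⟩, hb⟩
  have hfd : 0 < f d := hpos d ⟨had, le_rfl⟩
  have hbefore : ∀ x ∈ Ico d c, 0 < f x := fun x hx =>
    lt_of_not_ge fun hfx => (hleast ⟨⟨hx.1, hx.2.le.trans hcI.2⟩, hfx⟩).not_gt hx.2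
  obtain ⟨z, hz, hfz⟩ :=
    intermediate_value_Icc' hcI.1 (hf.mono (Icc_subset_Icc_right hcI.2)) ⟨hc, hfd.le⟩
  have hzc : z = c := le_antisymm hz.2 (not_lt.1 fun h => (hbefore z ⟨hz.1, h⟩).ne' hfz)
  refine ⟨c, ⟨had.trans_le hcI.1, hcI.2⟩, hzc ▸ hfz, fun x hx => ?_⟩
  rcases le_or_gt x d with hxd | hdx
  · exact hpos x ⟨hx.1, hxd⟩
  · exact hbefore x ⟨hdx.le, hx.2⟩

section PainleveI

variable {s s' : ℝ → ℝ}

theorem painleve_pos_near_zero (hs : ∀ t ≥ 0, HasDerivAt s (s' t) t)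
    (hs' : ∀ t ≥ 0, HasDerivAt s' (6 * t - 6 * s t ^ 2) t) (h0 : s 0 = 0) (h0' : s' 0 = 0) :
    ∃ δ > 0, ∀ t ∈ Ioc 0 δ, 0 < s t := by
  have hO : (fun t => s t) =O[𝓝 0] fun t => t := by
    simpa [h0, h0'] using (hs 0 le_rfl).isBigO_sub
  have hsq : ∀ᶠ t in 𝓝[>] 0, s t ^ 2 < t := by
    filter_upwards [self_mem_nhdsWithin,
      nhdsWithin_le_nhds (((hO.pow 2).trans_isLittleO (isLittleO_pow_id one_lt_two)).bound
        one_half_pos)] with t (ht : 0 < t) hbound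
    simp only [norm_pow, Real.norm_eq_abs, sq_abs, abs_of_pos ht] at hbound
    linarith
  obtain ⟨δ, hδ, hsub⟩ := mem_nhdsGT_iff_exists_Ioo_subset.1 hsq
  have hs'pos : ∀ t ∈ Ioc 0 δ, 0 < s' t := by
    refine pos_of_deriv_pos_of_eq_zero
      (fun t ht => (hs' t ht.1).continuousAt.continuousWithinAt) (fun t ht => ?_) h0'
    have : s t ^ 2 < t := hsub ht
    rw [(hs' t ht.1.le).deriv]
    linarith
  refine ⟨δ, hδ, pos_of_deriv_pos_of_eq_zero
    (fun t ht => (hs t ht.1).continuousAt.continuousWithinAt) (fun t ht => ?_) h0⟩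
  rw [(hs t ht.1.le).deriv]
  exact hs'pos t (Ioo_subset_Ioc_self ht)

/-- The first integral `s'² + 4s³ + 12∫₀ᵗ s - 12ts` without its integral term. -/
def painleveEnergy (s s' : ℝ → ℝ) (t : ℝ) : ℝ :=
  s' t ^ 2 + 4 * s t ^ 3 - 12 * t * s t

theorem hasDerivAt_painleveEnergy (hs : ∀ t ≥ 0, HasDerivAt s (s' t) t)
    (hs' : ∀ t ≥ 0, HasDerivAt s' (6 * t - 6 * s t ^ 2) t) {t : ℝ} (ht : 0 ≤ t) :
    HasDerivAt (painleveEnergy s s') (-12 * s t) t := by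
  have h := (((hs' t ht).fun_pow 2).add (((hs t ht).fun_pow 3).const_mul 4)).sub
    (((hasDerivAt_id' t).const_mul 12).fun_mul (hs t ht))
  refine h.congr_deriv ?_
  push_cast
  ring

theorem painleveEnergy_neg (hs : ∀ t ≥ 0, HasDerivAt s (s' t) t)
    (hs' : ∀ t ≥ 0, HasDerivAt s' (6 * t - 6 * s t ^ 2) t) (h0 : s 0 = 0) (h0' : s' 0 = 0)
    {T : ℝ} (hT : 0 < T) (hpos : ∀ t ∈ Ioo 0 T, 0 < s t) : painleveEnergy s s' T < 0 := by
  have hanti : StrictAntiOn (painleveEnergy s s') (Icc 0 T) := by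
    refine strictAntiOn_of_deriv_neg (convex_Icc 0 T)
      (fun t ht => (hasDerivAt_painleveEnergy hs hs' ht.1).continuousAt.continuousWithinAt)
      (fun t ht => ?_)
    rw [interior_Icc] at ht
    rw [(hasDerivAt_painleveEnergy hs hs' ht.1.le).deriv]
    linarith [hpos t ht]
  have hE0 : painleveEnergy s s' 0 = 0 := by simp [painleveEnergy, h0, h0']
  simpa [hE0] using hanti (left_mem_Icc.2 hT.le) (right_mem_Icc.2 hT.le) hT

end PainleveI

theorem painleve_positive
    (s : ℝ → ℝ)
    (hdiff : ∀ t ∈ Ici (0 : ℝ), DifferentiableAt ℝ s t ∧ DifferentiableAt ℝ (deriv s) t)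
    (heq : ∀ t ∈ Ici (0 : ℝ), deriv (deriv s) t = 6 * t - 6 * (s t) ^ 2)
    (h0 : s 0 = 0) (h0' : deriv s 0 = 0) :
    ∀ t : ℝ, 0 < t → 0 < s t := by
  have hs : ∀ t ≥ 0, HasDerivAt s (deriv s t) t := fun t ht => (hdiff t ht).1.hasDerivAt
  have hs' : ∀ t ≥ 0, HasDerivAt (deriv s) (6 * t - 6 * s t ^ 2) t := fun t ht =>
    heq t ht ▸ (hdiff t ht).2.hasDerivAt
  obtain ⟨δ, hδ, hpos⟩ := painleve_pos_near_zero hs hs' h0 h0'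
  intro t ht
  by_contra! hst
  have hδt : δ ≤ t := le_of_not_gt fun h => (hpos t ⟨ht, h.le⟩).not_ge hst
  obtain ⟨T, hT, hsT, hposT⟩ := exists_first_zero hδ hδt
    (fun x hx => (hs x (hδ.le.trans hx.1)).continuousAt.continuousWithinAt) hpos hst
  have hE := painleveEnergy_neg hs hs' h0 h0' hT.1 hposT
  rw [painleveEnergy, hsT] at hE
  nlinarith [sq_nonneg (deriv s T)]
end

section
/- Let s satisfy s''(t) = 6 t - 6 s(t)^2 on [0, ∞) with s(0) = s'(0) = 0 and s(t) > 0 for all t > 0. Then s(t) < √(3 t) for all t > 0. -/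
/-!
Along a solution of `s'' = 6 t - 6 s²` the quantity `12 t s - s'² - 4 s³` has derivative `12 s`,
so it equals `12 ∫₀ᵗ s` when `s(0) = s'(0) = 0`. Positivity of `s` makes it positive for `t > 0`,
whence `4 s³ < 12 t s`, i.e. `s² < 3 t`.
-/

open Set

noncomputable def painleveFirstIntegral (s : ℝ → ℝ) (t : ℝ) : ℝ :=
  12 * t * s t - deriv s t ^ 2 - 4 * s t ^ 3

lemma painleveFirstIntegral_zero {s : ℝ → ℝ} (h0 : s 0 = 0) (h0' : deriv s 0 = 0) :
    painleveFirstIntegral s 0 = 0 := by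
  simp [painleveFirstIntegral, h0, h0']

lemma hasDerivAt_painleveFirstIntegral {s : ℝ → ℝ} {t : ℝ} (hs : DifferentiableAt ℝ s t)
    (hs' : HasDerivAt (deriv s) (6 * t - 6 * s t ^ 2) t) :
    HasDerivAt (painleveFirstIntegral s) (12 * s t) t := by
  have hs := hs.hasDerivAt
  have h := ((((hasDerivAt_id t).const_mul 12).mul hs).sub (hs'.pow 2)).sub
    ((hs.pow 3).const_mul 4)
  exact h.congr_deriv <| by
    simp only [mul_one, id_eq, Nat.cast_ofNat, Nat.add_one_sub_one, pow_one]; ring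

lemma strictMonoOn_painleveFirstIntegral {s : ℝ → ℝ}
    (hderiv : ∀ t ∈ Ici (0 : ℝ), HasDerivAt (painleveFirstIntegral s) (12 * s t) t)
    (hpos : ∀ t : ℝ, 0 < t → 0 < s t) :
    StrictMonoOn (painleveFirstIntegral s) (Ici 0) := by
  refine strictMonoOn_of_deriv_pos (convex_Ici 0)
    (fun t ht ↦ (hderiv t ht).continuousAt.continuousWithinAt) fun t ht ↦ ?_
  rw [interior_Ici] at ht
  rw [(hderiv t (mem_Ici.mpr ht.le)).deriv]
  linarith [hpos t ht]

lemma sq_lt_of_painleveFirstIntegral_pos {s : ℝ → ℝ} {t : ℝ} (hst : 0 < s t)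
    (hF : 0 < painleveFirstIntegral s t) : s t ^ 2 < 3 * t := by
  unfold painleveFirstIntegral at hF
  nlinarith [sq_nonneg (deriv s t)]

theorem painleve_sqrt_upper_bound
    (s : ℝ → ℝ)
    (hdiff : ∀ t ∈ Ici (0 : ℝ), DifferentiableAt ℝ s t ∧ DifferentiableAt ℝ (deriv s) t)
    (heq : ∀ t ∈ Ici (0 : ℝ), deriv (deriv s) t = 6 * t - 6 * (s t) ^ 2)
    (h0 : s 0 = 0) (h0' : deriv s 0 = 0)
    (hpos : ∀ t : ℝ, 0 < t → 0 < s t) :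
    ∀ t : ℝ, 0 < t → s t < Real.sqrt (3 * t) := by
  intro t ht
  have hderiv : ∀ u ∈ Ici (0 : ℝ), HasDerivAt (painleveFirstIntegral s) (12 * s u) u :=
    fun u hu ↦ hasDerivAt_painleveFirstIntegral (hdiff u hu).1
      (heq u hu ▸ (hdiff u hu).2.hasDerivAt)
  have hF : 0 < painleveFirstIntegral s t := by
    simpa [painleveFirstIntegral_zero h0 h0'] using
      strictMonoOn_painleveFirstIntegral hderiv hpos self_mem_Ici ht.le ht
  exact (Real.lt_sqrt (hpos t ht).le).mpr (sq_lt_of_painleveFirstIntegral_pos (hpos t ht) hF)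
end

section
/- Let s satisfy s''(t) = 6 t - 6 s(t)^2 on [0, ∞) with s(0) = s'(0) = 0. Then for all t > 0, t^3 - (3/28) t^8 < s(t) < t^3. -/
open Set Filter Topology Metric

lemma HasDerivAt.congr_d {f : ℝ → ℝ} {a b x : ℝ} (h : HasDerivAt f a x) (hab : a = b) :
    HasDerivAt f b x := hab ▸ h

/-- Comparison: if `f a ≤ g a` and `f' ≤ g'` on the open interval, then `f b ≤ g b`. -/
lemma comp_le {f g f' g' : ℝ → ℝ} {a b : ℝ} (hab : a ≤ b)
    (hf : ∀ x ∈ Icc a b, HasDerivAt f (f' x) x)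
    (hg : ∀ x ∈ Icc a b, HasDerivAt g (g' x) x)
    (h0 : f a ≤ g a) (hle : ∀ x ∈ Ioo a b, f' x ≤ g' x) : f b ≤ g b := by
  have hsub : ∀ x ∈ Icc a b, HasDerivAt (fun u => g u - f u) (g' x - f' x) x :=
    fun x hx => (hg x hx).sub (hf x hx)
  have mono : MonotoneOn (fun u => g u - f u) (Icc a b) := by
    apply monotoneOn_of_deriv_nonneg (convex_Icc a b)
    · exact fun x hx => (hsub x hx).continuousAt.continuousWithinAt
    · intro x hx
      rw [interior_Icc] at hx
      exact (hsub x (Ioo_subset_Icc_self hx)).differentiableAt.differentiableWithinAt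
    · intro x hx
      rw [interior_Icc] at hx
      rw [(hsub x (Ioo_subset_Icc_self hx)).deriv]
      have := hle x hx; linarith
  have := mono (left_mem_Icc.2 hab) (right_mem_Icc.2 hab) hab
  simp only at this
  linarith

/-- Strict comparison. -/
lemma comp_lt {f g f' g' : ℝ → ℝ} {a b : ℝ} (hab : a < b)
    (hf : ∀ x ∈ Icc a b, HasDerivAt f (f' x) x)
    (hg : ∀ x ∈ Icc a b, HasDerivAt g (g' x) x)
    (h0 : f a ≤ g a) (hlt : ∀ x ∈ Ioo a b, f' x < g' x) : f b < g b := by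
  have hsub : ∀ x ∈ Icc a b, HasDerivAt (fun u => g u - f u) (g' x - f' x) x :=
    fun x hx => (hg x hx).sub (hf x hx)
  have mono : StrictMonoOn (fun u => g u - f u) (Icc a b) := by
    apply strictMonoOn_of_deriv_pos (convex_Icc a b)
    · exact fun x hx => (hsub x hx).continuousAt.continuousWithinAt
    · intro x hx
      rw [interior_Icc] at hx
      rw [(hsub x (Ioo_subset_Icc_self hx)).deriv]
      have := hlt x hx; linarith
  have := mono (left_mem_Icc.2 hab.le) (right_mem_Icc.2 hab.le) hab
  simp only at this
  linarith

set_option maxHeartbeats 2000000 in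
theorem painleve_polynomial_bounds
    (s : ℝ → ℝ)
    (hdiff : ∀ t ∈ Ici (0 : ℝ), DifferentiableAt ℝ s t ∧ DifferentiableAt ℝ (deriv s) t)
    (heq : ∀ t ∈ Ici (0 : ℝ), deriv (deriv s) t = 6 * t - 6 * (s t) ^ 2)
    (h0 : s 0 = 0) (h0' : deriv s 0 = 0) :
    ∀ t : ℝ, 0 < t → t ^ 3 - (3 / 28) * t ^ 8 < s t ∧ s t < t ^ 3 := by
  have Hs : ∀ x : ℝ, 0 ≤ x → HasDerivAt s (deriv s x) x :=
    fun x hx => ((hdiff x hx).1).hasDerivAt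
  have Hs' : ∀ x : ℝ, 0 ≤ x → HasDerivAt (deriv s) (6*x - 6*(s x)^2) x :=
    fun x hx => (heq x hx) ▸ ((hdiff x hx).2).hasDerivAt
  -- A: non-strict upper bounds
  have hA1 : ∀ x : ℝ, 0 ≤ x → deriv s x ≤ 3*x^2 := by
    intro x hx
    apply comp_le (f := deriv s) (g := fun u => 3*u^2) (f' := fun u => 6*u - 6*(s u)^2)
      (g' := fun u => 6*u) hx
      (fun u hu => Hs' u hu.1)
      (fun u _ => ((hasDerivAt_pow 2 u).const_mul (3:ℝ)).congr_d (by norm_num; try ring))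
      (by rw [h0']; norm_num)
      (fun u _ => by beta_reduce; nlinarith [sq_nonneg (s u)])
  have hA2 : ∀ x : ℝ, 0 ≤ x → s x ≤ x^3 := by
    intro x hx
    apply comp_le (f := s) (g := fun u => u^3) (f' := deriv s) (g' := fun u => 3*u^2) hx
      (fun u hu => Hs u hu.1)
      (fun u _ => (hasDerivAt_pow 3 u).congr_d (by norm_num; try ring))
      (by rw [h0]; norm_num)
      (fun u hu => hA1 u hu.1.le)
  -- B: local positivity near 0
  obtain ⟨ε, hε, hball⟩ : ∃ ε > 0, ∀ u : ℝ, dist u 0 < ε → |s u| < 1/2 := by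
    have h2 : Filter.Tendsto s (𝓝 0) (𝓝 0) := by
      have h := (hdiff 0 self_mem_Ici).1.continuousAt
      rwa [ContinuousAt, h0] at h
    have hmem : Ioo (-(1/2):ℝ) (1/2) ∈ 𝓝 (0:ℝ) := Ioo_mem_nhds (by norm_num) (by norm_num)
    have := h2 hmem
    rw [mem_map, Metric.mem_nhds_iff] at this
    obtain ⟨ε, hε, hsub⟩ := this
    exact ⟨ε, hε, fun u hu => by
      have := hsub (by simpa [Metric.mem_ball] using hu)
      rw [abs_lt]; exact ⟨this.1, this.2⟩⟩
  set d : ℝ := min (ε/2) (2/5) with hddef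
  have hd0 : 0 < d := lt_min (by linarith) (by norm_num)
  have hd25 : d ≤ 2/5 := min_le_right _ _
  have hsmall : ∀ u ∈ Icc (0:ℝ) d, |s u| ≤ 1/2 := by
    intro u hu
    have : dist u 0 < ε := by
      rw [Real.dist_eq, sub_zero, abs_of_nonneg hu.1]
      have := hu.2
      have : u ≤ ε/2 := le_trans this (min_le_left _ _)
      linarith
    exact (hball u this).le
  have hB2 : ∀ x ∈ Icc (0:ℝ) d, -(3/2)*x ≤ deriv s x := by
    intro x hx
    apply comp_le (f := fun u => -(3/2)*u) (g := deriv s) (f' := fun _ => -(3/2))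
      (g' := fun u => 6*u - 6*(s u)^2) hx.1
      (fun u _ => ((hasDerivAt_id u).const_mul (-(3/2):ℝ)).congr_d (by norm_num; try ring))
      (fun u hu => Hs' u hu.1)
      (by rw [h0']; norm_num)
      (fun u hu => by
        have h1 : |s u| ≤ 1/2 := hsmall u ⟨hu.1.le, le_trans hu.2.le hx.2⟩
        have h2 := abs_le.1 h1
        beta_reduce
        nlinarith [hu.1])
  have hB3 : ∀ x ∈ Icc (0:ℝ) d, -(3/4)*x^2 ≤ s x := by
    intro x hx
    apply comp_le (f := fun u => -(3/4)*u^2) (g := s) (f' := fun u => -(3/2)*u)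
      (g' := deriv s) hx.1
      (fun u _ => ((hasDerivAt_pow 2 u).const_mul (-(3/4):ℝ)).congr_d (by norm_num; try ring))
      (fun u hu => Hs u hu.1)
      (by rw [h0]; norm_num)
      (fun u hu => hB2 u ⟨hu.1.le, le_trans hu.2.le hx.2⟩)
  have hsq : ∀ u ∈ Icc (0:ℝ) d, (s u)^2 ≤ (9/16)*u^4 := by
    intro u hu
    have h1 := hB3 u hu
    have h2 := hA2 u hu.1
    have h3 : u^3 ≤ (2/5)*u^2 := by nlinarith [hu.1, le_trans hu.2 hd25, sq_nonneg u]
    nlinarith [sq_nonneg u, hu.1]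
  have hB5 : ∀ x ∈ Icc (0:ℝ) d, (5/6)*x^3 ≤ s x := by
    have hB4 : ∀ x ∈ Icc (0:ℝ) d, (5/2)*x^2 ≤ deriv s x := by
      intro x hx
      apply comp_le (f := fun u => (5/2)*u^2) (g := deriv s) (f' := fun u => 5*u)
        (g' := fun u => 6*u - 6*(s u)^2) hx.1
        (fun u _ => ((hasDerivAt_pow 2 u).const_mul ((5/2):ℝ)).congr_d (by norm_num; try ring))
        (fun u hu => Hs' u hu.1)
        (by rw [h0']; norm_num)
        (fun u hu => by
          have hu' : u ∈ Icc (0:ℝ) d := ⟨hu.1.le, le_trans hu.2.le hx.2⟩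
          have h1 := hsq u hu'
          have h2 : u ≤ 2/5 := le_trans hu'.2 hd25
          have h4 : u^3 ≤ (2/5)^3 := pow_le_pow_left₀ hu.1.le h2 3
          have h5 : u^4 ≤ (8/125)*u := by nlinarith [hu.1]
          beta_reduce
          nlinarith [hu.1])
    intro x hx
    apply comp_le (f := fun u => (5/6)*u^3) (g := s) (f' := fun u => (5/2)*u^2)
      (g' := deriv s) hx.1
      (fun u _ => ((hasDerivAt_pow 3 u).const_mul ((5/6):ℝ)).congr_d (by norm_num; try ring))
      (fun u hu => Hs u hu.1)
      (by rw [h0]; norm_num)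
      (fun u hu => hB4 u ⟨hu.1.le, le_trans hu.2.le hx.2⟩)
  -- F: strict upper bounds
  have hF1 : ∀ x : ℝ, 0 < x → deriv s x < 3*x^2 := by
    intro x hx
    set m : ℝ := min x d with hmdef
    have hm0 : 0 < m := lt_min hx hd0
    have hmd : m ≤ d := min_le_right _ _
    have hmx : m ≤ x := min_le_left _ _
    have hstage1 : deriv s m < 3*m^2 := by
      apply comp_lt (f := deriv s) (g := fun u => 3*u^2) (f' := fun u => 6*u - 6*(s u)^2)
        (g' := fun u => 6*u) hm0
        (fun u hu => Hs' u hu.1)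
        (fun u _ => ((hasDerivAt_pow 2 u).const_mul (3:ℝ)).congr_d (by norm_num; try ring))
        (by rw [h0']; norm_num)
        (fun u hu => by
          have h1 := hB5 u ⟨hu.1.le, le_trans hu.2.le hmd⟩
          have h2 : 0 < s u := lt_of_lt_of_le (by nlinarith [pow_pos hu.1 3]) h1
          beta_reduce
          nlinarith [pow_pos h2 2])
    rcases eq_or_lt_of_le hmx with heq' | hlt'
    · rw [← heq']; exact hstage1
    · have h := comp_le (f := fun u => deriv s u + (3*m^2 - deriv s m))
        (g := fun u => 3*u^2) (f' := fun u => 6*u - 6*(s u)^2) (g' := fun u => 6*u) hlt'.le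
        (fun u hu => (Hs' u (le_trans hm0.le hu.1)).add_const _)
        (fun u _ => ((hasDerivAt_pow 2 u).const_mul (3:ℝ)).congr_d (by norm_num; try ring))
        (by simp)
        (fun u _ => by beta_reduce; nlinarith [sq_nonneg (s u)])
      linarith
  have hF2 : ∀ x : ℝ, 0 < x → s x < x^3 := by
    intro x hx
    apply comp_lt (f := s) (g := fun u => u^3) (f' := deriv s) (g' := fun u => 3*u^2) hx
      (fun u hu => Hs u hu.1)
      (fun u _ => (hasDerivAt_pow 3 u).congr_d (by norm_num; try ring))
      (by rw [h0]; norm_num)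
      (fun u hu => hF1 u hu.1)
  -- C: conditional bootstrap lower bounds
  have hC : ∀ b : ℝ, 0 ≤ b → (∀ u ∈ Ico (0:ℝ) b, -u^3 ≤ s u) →
      ∀ x ∈ Icc (0:ℝ) b, 3*x^2 - (6/7)*x^7 ≤ deriv s x ∧ x^3 - (3/28)*x^8 ≤ s x := by
    intro b hb hlow
    have hC1 : ∀ x ∈ Icc (0:ℝ) b, 3*x^2 - (6/7)*x^7 ≤ deriv s x := by
      intro x hx
      apply comp_le (f := fun u => 3*u^2 - (6/7)*u^7) (g := deriv s)
        (f' := fun u => 6*u - 6*u^6) (g' := fun u => 6*u - 6*(s u)^2) hx.1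
        (fun u _ => (((hasDerivAt_pow 2 u).const_mul (3:ℝ)).sub
          ((hasDerivAt_pow 7 u).const_mul (6/7:ℝ))).congr_d (by norm_num; try ring))
        (fun u hu => Hs' u hu.1)
        (by rw [h0']; norm_num)
        (fun u hu => by
          have h1 : -u^3 ≤ s u := hlow u ⟨hu.1.le, lt_of_lt_of_le hu.2 hx.2⟩
          have h2 : s u ≤ u^3 := hA2 u hu.1.le
          have h3 : (s u)^2 ≤ (u^3)^2 := sq_le_sq' (by linarith) h2
          beta_reduce
          nlinarith)
    intro x hx
    refine ⟨hC1 x hx, ?_⟩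
    apply comp_le (f := fun u => u^3 - (3/28)*u^8) (g := s)
      (f' := fun u => 3*u^2 - (6/7)*u^7) (g' := deriv s) hx.1
      (fun u _ => ((hasDerivAt_pow 3 u).sub
        ((hasDerivAt_pow 8 u).const_mul (3/28:ℝ))).congr_d (by norm_num; try ring))
      (fun u hu => Hs u hu.1)
      (by rw [h0]; norm_num)
      (fun u hu => hC1 u ⟨hu.1.le, le_trans hu.2.le hx.2⟩)
  -- D: no downward crossing of -u^3 before u^5 = 56/3
  have hD : ∀ u : ℝ, 0 < u → u^5 < 56/3 → -u^3 < s u := by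
    set V : Set ℝ := {u : ℝ | 0 < u ∧ s u + u^3 ≤ 0} with hVdef
    by_cases hV : V.Nonempty
    · have hVd : ∀ u ∈ V, d ≤ u := by
        intro u hu
        by_contra hcon
        push_neg at hcon
        have h1 := hB5 u ⟨hu.1.le, hcon.le⟩
        have : 0 < s u + u^3 := by nlinarith [pow_pos hu.1 3]
        linarith [hu.2]
      set τ : ℝ := sInf V with hτdef
      have hbdd : BddBelow V := ⟨d, hVd⟩
      have hτd : d ≤ τ := le_csInf hV hVd
      have hτpos : 0 < τ := lt_of_lt_of_le hd0 hτd
      have hτle : ∀ u ∈ V, τ ≤ u := fun u hu => csInf_le hbdd hu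
      have hsτ : s τ + τ^3 ≤ 0 := by
        by_contra hcon
        push_neg at hcon
        have hct : ContinuousWithinAt (fun u => s u + u^3) (Ici 0) τ :=
          ((hdiff τ hτpos.le).1.continuousAt.continuousWithinAt).add
            ((continuous_pow 3).continuousAt.continuousWithinAt)
        have hev := hct (Ioi_mem_nhds hcon)
        rw [mem_map, mem_nhdsWithin_iff] at hev
        obtain ⟨δ, hδ, hsub⟩ := hev
        obtain ⟨w, hwV, hwlt⟩ := exists_lt_of_csInf_lt hV (show sInf V < τ + δ by
          linarith)
        have hwτ : τ ≤ w := hτle w hwV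
        have hwball : w ∈ Metric.ball τ δ ∩ Ici 0 := by
          constructor
          · rw [Metric.mem_ball, Real.dist_eq, abs_of_nonneg (by linarith)]
            linarith
          · exact le_trans hτpos.le hwτ
        have := hsub hwball
        simp only [mem_preimage, mem_Ioi] at this
        linarith [hwV.2]
      have hlow : ∀ u ∈ Ico (0:ℝ) τ, -u^3 ≤ s u := by
        intro u hu
        rcases eq_or_lt_of_le hu.1 with h | h
        · rw [← h]; simp [h0]
        · by_contra hcon
          push_neg at hcon
          have : u ∈ V := ⟨h, by linarith⟩
          exact absurd (hτle u this) (not_le.2 hu.2)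
      have hLτ := (hC τ hτpos.le hlow τ (right_mem_Icc.2 hτpos.le)).2
      have hτ5 : (56:ℝ)/3 ≤ τ^5 := by nlinarith [pow_pos hτpos 3, pow_pos hτpos 5]
      intro u hu hu5
      have huτ : u < τ := by
        by_contra hcon
        push_neg at hcon
        have : τ^5 ≤ u^5 := pow_le_pow_left₀ hτpos.le hcon 5
        linarith
      by_contra hcon
      push_neg at hcon
      exact absurd (hτle u ⟨hu, by linarith⟩) (not_le.2 huτ)
    · intro u hu _
      by_contra hcon
      push_neg at hcon
      exact hV ⟨u, hu, by linarith⟩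
  -- G: strict lower bounds for small t
  have hG1 : ∀ t : ℝ, 0 < t → t^5 < 56/3 → ∀ x ∈ Ioc (0:ℝ) t, 3*x^2 - (6/7)*x^7 < deriv s x := by
    intro t ht ht5 x hx
    apply comp_lt (f := fun u => 3*u^2 - (6/7)*u^7) (g := deriv s)
      (f' := fun u => 6*u - 6*u^6) (g' := fun u => 6*u - 6*(s u)^2) hx.1
      (fun u _ => (((hasDerivAt_pow 2 u).const_mul (3:ℝ)).sub
        ((hasDerivAt_pow 7 u).const_mul (6/7:ℝ))).congr_d (by norm_num; try ring))
      (fun u hu => Hs' u hu.1)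
      (by rw [h0']; norm_num)
      (fun u hu => by
        have hut : u < t := lt_of_lt_of_le hu.2 hx.2
        have hu5 : u^5 < 56/3 := lt_of_le_of_lt (pow_le_pow_left₀ hu.1.le hut.le 5) ht5
        have h1 : -u^3 < s u := hD u hu.1 hu5
        have h2 : s u < u^3 := hF2 u hu.1
        have h3 : (s u)^2 < (u^3)^2 := sq_lt_sq' h1 h2
        beta_reduce
        nlinarith)
  have hG : ∀ t : ℝ, 0 < t → t^5 < 56/3 → t^3 - (3/28)*t^8 < s t := by
    intro t ht ht5
    apply comp_lt (f := fun u => u^3 - (3/28)*u^8) (g := s)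
      (f' := fun u => 3*u^2 - (6/7)*u^7) (g' := deriv s) ht
      (fun u _ => ((hasDerivAt_pow 3 u).sub
        ((hasDerivAt_pow 8 u).const_mul (3/28:ℝ))).congr_d (by norm_num; try ring))
      (fun u hu => Hs u hu.1)
      (by rw [h0]; norm_num)
      (fun u hu => hG1 t ht ht5 u ⟨hu.1, hu.2.le⟩)
  -- values at 1
  have hs1l : (25:ℝ)/28 < s 1 := by
    have := hG 1 one_pos (by norm_num); norm_num at this; linarith
  have hs1u : s 1 < 1 := by have := hF2 1 one_pos; norm_num at this; linarith
  have hd1l : (15:ℝ)/7 < deriv s 1 := by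
    have := hG1 1 one_pos (by norm_num) 1 (by norm_num); norm_num at this; linarith
  have hd1u : deriv s 1 ≤ 3 := by have := hA1 1 zero_le_one; norm_num at this; linarith
  -- energy
  set E : ℝ → ℝ := fun u => (deriv s u)^2 + 4*(s u)^3 - 12*(u*(s u)) with hEdef
  have HE : ∀ x : ℝ, 0 ≤ x → HasDerivAt E (-12 * s x) x := by
    intro x hx
    have h1 := (Hs' x hx).pow 2
    have h2 := ((Hs x hx).pow 3).const_mul (4:ℝ)
    have h3 := ((hasDerivAt_id x).mul (Hs x hx)).const_mul (12:ℝ)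
    exact ((h1.add h2).sub h3).congr_d (by simp only [id_eq]; push_cast; ring)
  -- the energy trap: s t > -sqrt t for t ≥ 1
  have htrap : ∀ t : ℝ, 1 ≤ t → -Real.sqrt t < s t := by
    by_contra hcon
    push_neg at hcon
    obtain ⟨t₀, ht₀, hst₀⟩ := hcon
    set W : Set ℝ := {u : ℝ | 1 ≤ u ∧ s u + Real.sqrt u ≤ 0} with hWdef
    have hW : W.Nonempty := ⟨t₀, ht₀, by linarith⟩
    set σ : ℝ := sInf W with hσdef
    have hWb : BddBelow W := ⟨1, fun u hu => hu.1⟩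
    have hσ1 : 1 ≤ σ := le_csInf hW (fun u hu => hu.1)
    have hσ0 : (0:ℝ) < σ := lt_of_lt_of_le one_pos hσ1
    have hσle : ∀ u ∈ W, σ ≤ u := fun u hu => csInf_le hWb hu
    have hctσ : ContinuousWithinAt (fun u => s u + Real.sqrt u) (Ici 0) σ :=
      ((hdiff σ hσ0.le).1.continuousAt.continuousWithinAt).add
        (Real.continuous_sqrt.continuousAt.continuousWithinAt)
    have hσs : s σ + Real.sqrt σ ≤ 0 := by
      by_contra hcon2
      push_neg at hcon2
      have hev := hctσ (Ioi_mem_nhds hcon2)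
      rw [mem_map, mem_nhdsWithin_iff] at hev
      obtain ⟨δ, hδ, hsub⟩ := hev
      obtain ⟨w, hwW, hwlt⟩ := exists_lt_of_csInf_lt hW (show sInf W < σ + δ by
        linarith)
      have hwσ : σ ≤ w := hσle w hwW
      have hwball : w ∈ Metric.ball σ δ ∩ Ici 0 := by
        refine ⟨?_, mem_Ici.2 (by linarith)⟩
        rw [Metric.mem_ball, Real.dist_eq, abs_of_nonneg (by linarith)]
        linarith
      have := hsub hwball
      simp only [mem_preimage, mem_Ioi] at this
      linarith [hwW.2]
    have hσgt1 : 1 < σ := by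
      rcases eq_or_lt_of_le hσ1 with h | h
      · exfalso; rw [← h, Real.sqrt_one] at hσs; linarith
      · exact h
    have hnotW : ∀ u : ℝ, 1 ≤ u → u < σ → 0 < s u + Real.sqrt u := by
      intro u h1u huσ
      by_contra hc
      push_neg at hc
      exact absurd (hσle u ⟨h1u, hc⟩) (not_le.2 huσ)
    have hσs' : 0 ≤ s σ + Real.sqrt σ := by
      have hne : (𝓝[Ico 1 σ] σ).NeBot := by
        rw [← mem_closure_iff_nhdsWithin_neBot, closure_Ico (ne_of_lt hσgt1)]
        exact ⟨hσgt1.le, le_rfl⟩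
      have htd : Filter.Tendsto (fun u => s u + Real.sqrt u) (𝓝[Ico 1 σ] σ)
          (𝓝 (s σ + Real.sqrt σ)) :=
        hctσ.mono (fun u hu => le_trans zero_le_one hu.1)
      apply ge_of_tendsto htd
      filter_upwards [self_mem_nhdsWithin] with u hu
      exact (hnotW u hu.1 hu.2).le
    have hσeq : s σ = -Real.sqrt σ := by linarith
    set Φ : ℝ → ℝ := fun u => 8*(u*Real.sqrt u) - E u with hΦdef
    have HΦ : ∀ x ∈ Icc (1:ℝ) σ, HasDerivAt Φ (12*Real.sqrt x + 12*(s x)) x := by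
      intro x hx
      have hx0 : (0:ℝ) < x := lt_of_lt_of_le one_pos hx.1
      have hxs : Real.sqrt x * Real.sqrt x = x := Real.mul_self_sqrt hx0.le
      have hxne : Real.sqrt x ≠ 0 := ne_of_gt (Real.sqrt_pos.2 hx0)
      have hsq : HasDerivAt Real.sqrt (1/(2*Real.sqrt x)) x := Real.hasDerivAt_sqrt hx0.ne'
      have h1 : HasDerivAt (fun u => 8*(u*Real.sqrt u)) (12*Real.sqrt x) x := by
        refine (((hasDerivAt_id x).mul hsq).const_mul (8:ℝ)).congr_d ?_
        have h9 : x / (2 * Real.sqrt x) = Real.sqrt x / 2 := by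
          rw [div_eq_div_iff (by positivity) (by norm_num)]
          linarith [hxs]
        simp only [id_eq, one_mul, mul_one_div]
        rw [h9]; ring
      exact (h1.sub (HE x hx0.le)).congr_d (by ring)
    have hΦmono : Φ 1 ≤ Φ σ := by
      apply comp_le (f := fun _ => Φ 1) (g := Φ) (f' := fun _ => 0)
        (g' := fun u => 12*Real.sqrt u + 12*(s u)) hσgt1.le
        (fun x _ => hasDerivAt_const x _) HΦ le_rfl
        (fun u hu => by
          have := hnotW u hu.1.le hu.2
          have hsu : 0 ≤ Real.sqrt u := Real.sqrt_nonneg u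
          beta_reduce
          linarith)
    have hΦ1 : 0 < Φ 1 := by
      have h1 : Φ 1 = 8 - E 1 := by
        rw [hΦdef]; simp [Real.sqrt_one]
      have h2 : E 1 = (deriv s 1)^2 + 4*(s 1)^3 - 12*(1*(s 1)) := rfl
      have hb1 : (deriv s 1)^2 ≤ 9 := by nlinarith
      have hb2 : (s 1)^3 < 1 := by nlinarith [hs1l, hs1u, sq_nonneg (s 1), sq_nonneg (s 1 + 1)]
      rw [h1, h2]
      nlinarith
    have hΦσ : Φ σ = -(deriv s σ)^2 := by
      have hss : Real.sqrt σ ^ 2 = σ := Real.sq_sqrt hσ0.le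
      rw [hΦdef]
      simp only
      rw [hEdef]
      simp only
      rw [hσeq]
      linear_combination (4*Real.sqrt σ) * hss
    nlinarith [sq_nonneg (deriv s σ)]
  -- final assembly
  intro t ht
  refine ⟨?_, hF2 t ht⟩
  by_cases hc : t^5 < 56/3
  · exact hG t ht hc
  · push_neg at hc
    have ht1 : 1 ≤ t := by
      by_contra h
      push_neg at h
      have : t^5 < 1 := pow_lt_one₀ ht.le h (by norm_num)
      linarith
    have h1 := htrap t ht1
    have h2 : Real.sqrt t ≤ t^3 := by
      have ha : Real.sqrt t ≤ t := by
        have h3 : t ≤ t^2 := by nlinarith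
        calc Real.sqrt t ≤ Real.sqrt (t^2) := Real.sqrt_le_sqrt h3
          _ = t := Real.sqrt_sq ht.le
      have hcube : (0:ℝ) ≤ t*(t-1)*(t+1) :=
        mul_nonneg (mul_nonneg ht.le (by linarith)) (by linarith)
      linarith [ha]
    have h4 : (0:ℝ) ≤ t^3*(t^5 - 56/3) := mul_nonneg (pow_pos ht 3).le (by linarith)
    have h3 : t^3 - (3/28)*t^8 ≤ -Real.sqrt t := by nlinarith [h4, h2]
    linarith
end

section
/- Let s be continuous on [0, ∞) with s(t) < t^3 and s(t) > t^3 - (3/28) t^8 for all t > 0, s(0) = 0. If t₀ is the least positive real with s(t₀) = √t₀, then 1 < t₀ < (5/4)^{2/5}. -/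
open Set

theorem first_crossing_bounds
    (s : ℝ → ℝ) (hcont : ContinuousOn s (Ici (0 : ℝ))) (h0 : s 0 = 0)
    (hub : ∀ t : ℝ, 0 < t → s t < t ^ 3)
    (hlb : ∀ t : ℝ, 0 < t → s t > t ^ 3 - (3 / 28) * t ^ 8)
    (t₀ : ℝ) (ht₀pos : 0 < t₀) (ht₀ : s t₀ = Real.sqrt t₀)
    (hleast : ∀ t : ℝ, 0 < t → s t = Real.sqrt t → t₀ ≤ t) :
    1 < t₀ ∧ t₀ < (5 / 4 : ℝ) ^ ((2 : ℝ) / 5) := by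
  -- lower bound
  have hlow : 1 < t₀ := by
    by_contra h
    push_neg at h
    have h1 : t₀ ^ 3 ≤ t₀ := by nlinarith [mul_nonneg (mul_nonneg ht₀pos.le (sub_nonneg.mpr h)) (by linarith : (0:ℝ) ≤ 1 + t₀)]
    have h2 : t₀ ≤ Real.sqrt t₀ := by
      have : Real.sqrt (t₀ ^ 2) ≤ Real.sqrt t₀ :=
        Real.sqrt_le_sqrt (by nlinarith [mul_nonneg ht₀pos.le (sub_nonneg.mpr h)])
      rwa [Real.sqrt_sq ht₀pos.le] at this
    have := hub t₀ ht₀pos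
    rw [ht₀] at this
    linarith
  -- upper bound
  set a : ℝ := (5 / 4 : ℝ) ^ ((1 : ℝ) / 5) with ha
  have hapos : 0 < a := Real.rpow_pos_of_pos (by norm_num) _
  have ha5 : a ^ 5 = 5 / 4 := by
    rw [ha, ← Real.rpow_natCast _ 5, ← Real.rpow_mul (by norm_num)]
    norm_num
  have ha1 : 1 < a := by
    rw [ha]
    apply Real.one_lt_rpow_iff_of_pos (by norm_num) |>.mpr
    norm_num
  set T : ℝ := (5 / 4 : ℝ) ^ ((2 : ℝ) / 5) with hT
  have hTa : T = a ^ 2 := by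
    rw [hT, ha, ← Real.rpow_natCast _ 2, ← Real.rpow_mul (by norm_num)]
    norm_num
  have hsqrtT : Real.sqrt T = a := by
    rw [hTa, Real.sqrt_sq hapos.le]
  have h1T : 1 < T := by
    rw [hTa]; nlinarith
  -- key inequality: s T > sqrt T
  have hkey : Real.sqrt T < s T := by
    have h1 := hlb T (by linarith)
    have h2 : Real.sqrt T < T ^ 3 - (3 / 28) * T ^ 8 := by
      rw [hsqrtT, hTa]
      have h15 : a ^ 15 = (5/4)^3 := by
        rw [← ha5]; ring
      nlinarith [ha5, h15, hapos]
    linarith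
  -- IVT on [1, T]
  have hcontf : ContinuousOn (fun t => s t - Real.sqrt t) (Icc 1 T) := by
    apply ContinuousOn.sub
    · exact hcont.mono (fun x hx => le_trans (by norm_num) hx.1)
    · exact Real.continuous_sqrt.continuousOn
  have hmem : (0 : ℝ) ∈ Icc (s 1 - Real.sqrt 1) (s T - Real.sqrt T) := by
    constructor
    · have := hub 1 one_pos
      rw [Real.sqrt_one]
      simp only [one_pow] at this
      linarith
    · linarith
  obtain ⟨c, hcmem, hc⟩ := intermediate_value_Icc h1T.le hcontf hmem
  have hcpos : 0 < c := lt_of_lt_of_le one_pos hcmem.1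
  have hcs : s c = Real.sqrt c := by
    have : s c - Real.sqrt c = 0 := hc
    linarith
  have hcT : c < T := by
    rcases lt_or_eq_of_le hcmem.2 with h | h
    · exact h
    · exfalso; rw [h] at hcs; rw [hcs] at hkey; linarith
  exact ⟨hlow, lt_of_le_of_lt (hleast c hcpos hcs) hcT⟩
end

section
/- Let s satisfy s''(t) = 6 t - 6 s(t)^2 on (0, ∞) with 0 < s(t) < √(3t) for t > 0. Let 0 < a < b and suppose s(t) < √t for all t ∈ (a, b). Then b - a < π · 6^{-1/2} · a^{-1/4}. -/
/-!
Write `F = √· - s`, which is positive on `(a, b)`. Using `s'' = 6t - 6s²`,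
`F'' = -(4 t √t)⁻¹ - 6 (√t + s) F`, and `6 (√t + s) > 6 √a = k²` on `(a, b)`, so `F'' + k² F < 0`
there. If `b - a ≥ π / k`, the Wronskian of `F` and `sin (k (t - a))` is strictly increasing on
`[a, a + π / k]`, yet it equals `k F(a) ≥ 0` at the left end and `-k F(a + π / k) ≤ 0` at the
right end.
-/

open Set Real

/-- Sturm comparison with `sin (k (t - a))`, through their Wronskian. -/
theorem neg_or_neg_of_second_deriv_add_sq_mul_neg {F F' F'' : ℝ → ℝ} {a k : ℝ} (hk : 0 < k)
    (hF : ∀ t ∈ Icc a (a + π / k), HasDerivAt F (F' t) t)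
    (hF' : ∀ t ∈ Icc a (a + π / k), HasDerivAt F' (F'' t) t)
    (hneg : ∀ t ∈ Ioo a (a + π / k), F'' t + k ^ 2 * F t < 0) :
    F a < 0 ∨ F (a + π / k) < 0 := by
  set c := a + π / k with hc
  have hac : a < c := by simp only [hc]; linarith [div_pos pi_pos hk]
  have hkc : k * (c - a) = π := by simp only [hc]; field_simp; ring
  set g : ℝ → ℝ := fun t => sin (k * (t - a))
  set g' : ℝ → ℝ := fun t => k * cos (k * (t - a))
  have hlin (t : ℝ) : HasDerivAt (fun t => k * (t - a)) k t := by
    simpa using ((hasDerivAt_id t).sub_const a).const_mul k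
  have hg (t : ℝ) : HasDerivAt g (g' t) t :=
    ((hasDerivAt_sin _).comp t (hlin t)).congr_deriv (by simp only [g']; ring)
  have hg' (t : ℝ) : HasDerivAt g' (-k ^ 2 * g t) t :=
    (((hasDerivAt_cos _).comp t (hlin t)).const_mul k).congr_deriv (by simp only [g]; ring)
  have hg_pos : ∀ t ∈ Ioo a c, 0 < g t := fun t ht =>
    sin_pos_of_pos_of_lt_pi (mul_pos hk (by linarith [ht.1]))
      (by rw [← hkc]; exact mul_lt_mul_of_pos_left (by linarith [ht.2]) hk)
  set W : ℝ → ℝ := fun t => F t * g' t - F' t * g t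
  have hW : ∀ t ∈ Icc a c, HasDerivAt W (-(F'' t + k ^ 2 * F t) * g t) t := fun t ht =>
    (((hF t ht).mul (hg' t)).sub ((hF' t ht).mul (hg t))).congr_deriv (by ring)
  have hW_mono : StrictMonoOn W (Icc a c) := by
    refine strictMonoOn_of_deriv_pos (convex_Icc a c)
      (fun t ht => (hW t ht).continuousAt.continuousWithinAt) fun t ht => ?_
    rw [interior_Icc] at ht
    rw [(hW t (Ioo_subset_Icc_self ht)).deriv]
    exact mul_pos (neg_pos.mpr (hneg t ht)) (hg_pos t ht)
  have hWa : W a = F a * k := by simp [W, g, g']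
  have hWc : W c = -(F c * k) := by simp only [W, g, g', hkc, sin_pi, cos_pi]; ring
  have hlt := hW_mono (left_mem_Icc.mpr hac.le) (right_mem_Icc.mpr hac.le) hac
  by_contra! h
  nlinarith [mul_nonneg h.1 hk.le, mul_nonneg h.2 hk.le]

theorem nonneg_of_continuousOn_Icc_of_pos_Ioo {f : ℝ → ℝ} {a b : ℝ} (hab : a < b)
    (hf : ContinuousOn f (Icc a b)) (hpos : ∀ t ∈ Ioo a b, 0 < f t) :
    ∀ t ∈ Icc a b, 0 ≤ f t := by
  have hclosed : IsClosed (Icc a b ∩ f ⁻¹' Ici 0) :=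
    hf.preimage_isClosed_of_isClosed isClosed_Icc isClosed_Ici
  have hsub : Ioo a b ⊆ Icc a b ∩ f ⁻¹' Ici 0 := fun t ht =>
    ⟨Ioo_subset_Icc_self ht, (hpos t ht).le⟩
  intro t ht
  rw [← closure_Ioo hab.ne] at ht
  exact (hclosed.closure_subset_iff.mpr hsub ht).2

theorem hasDerivAt_inv_two_mul_sqrt {t : ℝ} (ht : 0 < t) :
    HasDerivAt (fun x => (2 * √x)⁻¹) (-(4 * t * √t)⁻¹) t := by
  have hsqrt : 0 < √t := sqrt_pos.mpr ht
  refine (((hasDerivAt_sqrt ht.ne').const_mul 2).inv (by positivity)).congr_deriv ?_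
  field_simp
  rw [sq_sqrt ht.le]
  ring

theorem rpow_neg_half_mul_rpow_neg_quarter {x a : ℝ} (hx : 0 ≤ x) (ha : 0 ≤ a) :
    x ^ (-(1 : ℝ) / 2) * a ^ (-(1 : ℝ) / 4) = (√(x * √a))⁻¹ := by
  rw [sqrt_mul hx, sqrt_eq_rpow x, sqrt_eq_rpow (√a), sqrt_eq_rpow a, ← rpow_mul ha,
    mul_inv, ← rpow_neg hx, ← rpow_neg ha]
  norm_num

/-- The sign condition of the Sturm comparison for `F = √· - s` and `k² = 6 √a`,
with `x = s t`. -/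
theorem second_deriv_add_sq_mul_neg {a t x : ℝ} (ha : 0 < a) (hat : a ≤ t) (hx : 0 < x)
    (hxt : x < √t) :
    -(4 * t * √t)⁻¹ - (6 * t - 6 * x ^ 2) + √(6 * √a) ^ 2 * (√t - x) < 0 := by
  have ht : 0 < t := ha.trans_le hat
  have hinv : 0 < (4 * t * √t)⁻¹ := by have := sqrt_pos.mpr ht; positivity
  have hsqrt_le : √a ≤ √t := sqrt_le_sqrt hat
  rw [sq_sqrt (by positivity)]
  nlinarith [sq_sqrt ht.le, mul_pos hx (sub_pos.mpr hxt),
    mul_le_mul_of_nonneg_right hsqrt_le (sub_pos.mpr hxt).le]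

theorem oscillation_interval_upper_bound
    (s : ℝ → ℝ)
    (hdiff : ∀ t ∈ Ioi (0 : ℝ), DifferentiableAt ℝ s t ∧ DifferentiableAt ℝ (deriv s) t)
    (heq : ∀ t ∈ Ioi (0 : ℝ), deriv (deriv s) t = 6 * t - 6 * (s t) ^ 2)
    (hbd : ∀ t : ℝ, 0 < t → 0 < s t ∧ s t < Real.sqrt (3 * t))
    (a b : ℝ) (ha : 0 < a) (hab : a < b)
    (hbelow : ∀ t ∈ Ioo a b, s t < Real.sqrt t) :
    b - a < π * (6 : ℝ) ^ (-(1 : ℝ) / 2) * a ^ (-(1 : ℝ) / 4) := by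
  set k := √(6 * √a)
  have hk : 0 < k := by positivity
  rw [mul_assoc, rpow_neg_half_mul_rpow_neg_quarter (by norm_num) ha.le, ← div_eq_mul_inv]
  by_contra! hle
  have hF : ∀ t ∈ Ioi (0 : ℝ), HasDerivAt (fun t => √t - s t) ((2 * √t)⁻¹ - deriv s t) t :=
    fun t ht => ((hasDerivAt_sqrt (ne_of_gt ht)).sub (hdiff t ht).1.hasDerivAt).congr_deriv
      (by rw [one_div])
  have hF' : ∀ t ∈ Ioi (0 : ℝ), HasDerivAt (fun t => (2 * √t)⁻¹ - deriv s t)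
      (-(4 * t * √t)⁻¹ - (6 * t - 6 * s t ^ 2)) t := fun t ht =>
    heq t ht ▸ (hasDerivAt_inv_two_mul_sqrt ht).sub (hdiff t ht).2.hasDerivAt
  have hIcc : Icc a b ⊆ Ioi 0 := fun t ht => ha.trans_le ht.1
  have hIcc_c : Icc a (a + π / k) ⊆ Icc a b := Icc_subset_Icc_right (by linarith)
  have hF_nonneg := nonneg_of_continuousOn_Icc_of_pos_Ioo hab
    (fun t ht => (hF t (hIcc ht)).continuousAt.continuousWithinAt)
    (fun t ht => sub_pos.mpr (hbelow t ht))
  rcases neg_or_neg_of_second_deriv_add_sq_mul_neg hk (fun t ht => hF t (hIcc (hIcc_c ht)))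
    (fun t ht => hF' t (hIcc (hIcc_c ht))) (fun t ht => second_deriv_add_sq_mul_neg ha ht.1.le
      (hbd t (ha.trans ht.1)).1 (hbelow t (Ioo_subset_Ioo_right (by linarith) ht)))
    with h | h
  · exact h.not_ge (hF_nonneg a (left_mem_Icc.mpr hab.le))
  · exact h.not_ge (hF_nonneg _ (hIcc_c (right_mem_Icc.mpr (le_add_of_nonneg_right (by positivity)))))
end

section
/- Let s satisfy s''(t) = 6 t - 6 s(t)^2 on (0, ∞) with 0 < s(t) < √(3t) for t > 0. Let 0 < a < b, suppose s(t) > √t for all t ∈ (a, b), and s(a) = √a, s(b) = √b. Then b - a > π · (6(1 + √3))^{-1/2} · b^{-1/4}. -/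
/-!
The deviation `f = s - √·` satisfies `f'' = φ - Φ f` with `φ t = 1 / (4 t^{3/2}) > 0` and
`Φ = 6 (√t + s) < λ := 6 (1 + √3) √b` on `(a, b)`, so `f'' + λ f > 0` there. Sturm comparison
of `f`, which vanishes at `a` and `b` and is positive in between, with `g t = sin (√λ (t - a))`
then forces `√λ (b - a) > π`: otherwise `g ≥ 0` on `[a, b]`, and the Wronskian `f g' - f' g`
strictly decreases from `0` at `a`, yet equals `-f'(b) g(b) ≥ 0` at `b`.
-/

open Set Real

lemma HasDerivAt.nonpos_of_forall_le_left {f : ℝ → ℝ} {f' a b : ℝ} (hf : HasDerivAt f f' b)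
    (hab : a < b) (hle : ∀ x ∈ Ioo a b, f b ≤ f x) : f' ≤ 0 := by
  have hslope : Filter.Tendsto (slope f b) (nhdsWithin b (Iio b)) (nhds f') :=
    (hasDerivAt_iff_tendsto_slope.mp hf).mono_left (nhdsWithin_mono b fun _ hx => ne_of_lt hx)
  refine le_of_tendsto hslope ?_
  filter_upwards [Ioo_mem_nhdsLT hab] with x hx
  rw [slope_def_field]
  exact div_nonpos_of_nonneg_of_nonpos (by linarith [hle x hx]) (by linarith [hx.2])

lemma strictAntiOn_wronskian {f f' f'' g g' : ℝ → ℝ} {a b k : ℝ}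
    (hf : ∀ t ∈ Icc a b, HasDerivAt f (f' t) t) (hf' : ∀ t ∈ Icc a b, HasDerivAt f' (f'' t) t)
    (hg : ∀ t ∈ Icc a b, HasDerivAt g (g' t) t)
    (hg' : ∀ t ∈ Icc a b, HasDerivAt g' (-k ^ 2 * g t) t)
    (hpos : ∀ t ∈ Ioo a b, 0 < g t * (f'' t + k ^ 2 * f t)) :
    StrictAntiOn (fun t => f t * g' t - f' t * g t) (Icc a b) := by
  have hW : ∀ t ∈ Icc a b,
      HasDerivAt (fun t => f t * g' t - f' t * g t) (-(g t * (f'' t + k ^ 2 * f t))) t := by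
    intro t ht
    refine (((hf t ht).mul (hg' t ht)).sub ((hf' t ht).mul (hg t ht))).congr_deriv ?_
    ring
  refine strictAntiOn_of_deriv_neg (convex_Icc a b)
    (fun t ht => (hW t ht).continuousAt.continuousWithinAt) fun t ht => ?_
  rw [interior_Icc] at ht
  rw [(hW t (Ioo_subset_Icc_self ht)).deriv]
  linarith [hpos t ht]

/-- Sturm comparison with `sin (k (t - a))`, a solution of `g'' + k ^ 2 g = 0`. -/
theorem pi_lt_mul_sub_of_sturm {f f' f'' : ℝ → ℝ} {a b k : ℝ} (hk : 0 < k) (hab : a < b)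
    (hf : ∀ t ∈ Icc a b, HasDerivAt f (f' t) t) (hf' : ∀ t ∈ Icc a b, HasDerivAt f' (f'' t) t)
    (hfa : f a = 0) (hfb : f b = 0) (hpos : ∀ t ∈ Ioo a b, 0 < f t)
    (hsuper : ∀ t ∈ Ioo a b, 0 < f'' t + k ^ 2 * f t) : π < k * (b - a) := by
  by_contra! hle
  have hlin (t : ℝ) : HasDerivAt (fun t => k * (t - a)) k t := by
    simpa using ((hasDerivAt_id t).sub_const a).const_mul k
  have hg (t : ℝ) : HasDerivAt (fun t => sin (k * (t - a))) (k * cos (k * (t - a))) t :=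
    ((hasDerivAt_sin _).comp t (hlin t)).congr_deriv (mul_comm _ _)
  have hg' (t : ℝ) :
      HasDerivAt (fun t => k * cos (k * (t - a))) (-k ^ 2 * sin (k * (t - a))) t := by
    refine (((hasDerivAt_cos _).comp t (hlin t)).const_mul k).congr_deriv ?_
    ring
  have hg_pos : ∀ t ∈ Ioo a b, 0 < sin (k * (t - a)) := fun t ht =>
    sin_pos_of_pos_of_lt_pi (mul_pos hk (sub_pos.2 ht.1))
      (lt_of_lt_of_le (by nlinarith [ht.2]) hle)
  have hg_b : 0 ≤ sin (k * (b - a)) :=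
    sin_nonneg_of_nonneg_of_le_pi (mul_nonneg hk.le (sub_nonneg.2 hab.le)) hle
  have hf'b : f' b ≤ 0 := (hf b (right_mem_Icc.2 hab.le)).nonpos_of_forall_le_left hab
    fun x hx => hfb ▸ (hpos x hx).le
  have hW := strictAntiOn_wronskian hf hf' (fun t _ => hg t) (fun t _ => hg' t)
    (fun t ht => mul_pos (hg_pos t ht) (hsuper t ht))
    (left_mem_Icc.2 hab.le) (right_mem_Icc.2 hab.le) hab
  simp only [hfa, hfb, sub_self, mul_zero, sin_zero, zero_mul, zero_sub] at hW
  nlinarith [mul_nonpos_of_nonpos_of_nonneg hf'b hg_b]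

lemma hasDerivAt_one_div_two_mul_sqrt {t : ℝ} (ht : 0 < t) :
    HasDerivAt (fun t => 1 / (2 * √t)) (-(1 / (4 * (t * √t)))) t := by
  have hsqrt : 0 < √t := sqrt_pos.2 ht
  have h := ((hasDerivAt_sqrt ht.ne').const_mul 2).inv (by positivity : 2 * √t ≠ 0)
  simp only [one_div] at h ⊢
  refine h.congr_deriv ?_
  field_simp
  rw [sq_sqrt ht.le]
  ring

lemma rpow_neg_half_mul_rpow_neg_quarter_s18 {c b : ℝ} (hc : 0 ≤ c) (hb : 0 ≤ b) :
    c ^ (-(1 : ℝ) / 2) * b ^ (-(1 : ℝ) / 4) = (√(c * √b))⁻¹ := by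
  have hb4 : b ^ (1 / 4 : ℝ) = √(√b) := by
    rw [sqrt_eq_rpow, sqrt_eq_rpow, ← rpow_mul hb]
    norm_num
  rw [neg_div, neg_div, rpow_neg hc, rpow_neg hb, ← mul_inv, hb4, ← sqrt_eq_rpow, sqrt_mul hc]

/-- `f'' + λ f > 0` for the deviation `f = s - √t`, with `f'' = φ - Φ f` written out. -/
lemma deviation_second_deriv_add_mul_pos {s t b : ℝ} (ht : 0 < t) (htb : t ≤ b)
    (hs : s < √(3 * t)) (habove : √t < s) :
    0 < 1 / (4 * (t * √t)) - 6 * (√t + s) * (s - √t) + 6 * (1 + √3) * √b * (s - √t) := by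
  have hsqrt : 0 < √t := sqrt_pos.2 ht
  have hs' : s < √3 * √t := by rwa [sqrt_mul (by norm_num)] at hs
  have htb' : √t ≤ √b := sqrt_le_sqrt htb
  have hgap : 0 < (1 + √3) * √b - (√t + s) := by
    nlinarith [sqrt_nonneg 3]
  have hφ : 0 < 1 / (4 * (t * √t)) := by positivity
  nlinarith [mul_pos (sub_pos.2 habove) hgap]

theorem oscillation_interval_lower_bound
    (s : ℝ → ℝ)
    (hdiff : ∀ t ∈ Ioi (0 : ℝ), DifferentiableAt ℝ s t ∧ DifferentiableAt ℝ (deriv s) t)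
    (heq : ∀ t ∈ Ioi (0 : ℝ), deriv (deriv s) t = 6 * t - 6 * (s t) ^ 2)
    (hbd : ∀ t : ℝ, 0 < t → 0 < s t ∧ s t < Real.sqrt (3 * t))
    (a b : ℝ) (ha : 0 < a) (hab : a < b)
    (habove : ∀ t ∈ Ioo a b, s t > Real.sqrt t)
    (hsa : s a = Real.sqrt a) (hsb : s b = Real.sqrt b) :
    b - a > π * (6 * (1 + Real.sqrt 3)) ^ (-(1 : ℝ) / 2) * b ^ (-(1 : ℝ) / 4) := by
  have hb : 0 < b := ha.trans hab
  have hlam : 0 < 6 * (1 + √3) * √b := by positivity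
  rw [mul_assoc, rpow_neg_half_mul_rpow_neg_quarter_s18 (by positivity) hb.le, ← div_eq_mul_inv,
    gt_iff_lt, div_lt_iff₀' (sqrt_pos.2 hlam)]
  have pos_of_mem {t : ℝ} (ht : t ∈ Icc a b) : 0 < t := ha.trans_le ht.1
  have hf (t : ℝ) (ht : t ∈ Icc a b) :
      HasDerivAt (fun t => s t - √t) (deriv s t - 1 / (2 * √t)) t :=
    (hdiff t (pos_of_mem ht)).1.hasDerivAt.sub (hasDerivAt_sqrt (pos_of_mem ht).ne')
  have hf' (t : ℝ) (ht : t ∈ Icc a b) : HasDerivAt (fun t => deriv s t - 1 / (2 * √t))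
      (1 / (4 * (t * √t)) - 6 * (√t + s t) * (s t - √t)) t := by
    have h := (hdiff t (pos_of_mem ht)).2.hasDerivAt.sub
      (hasDerivAt_one_div_two_mul_sqrt (pos_of_mem ht))
    rw [heq t (pos_of_mem ht)] at h
    refine h.congr_deriv ?_
    linear_combination -6 * Real.sq_sqrt (pos_of_mem ht).le
  refine pi_lt_mul_sub_of_sturm (sqrt_pos.2 hlam) hab hf hf' (by simp [hsa]) (by simp [hsb])
    (fun t ht => sub_pos.2 (habove t ht)) fun t ht => ?_
  have ht0 : 0 < t := ha.trans ht.1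
  rw [sq_sqrt hlam.le]
  exact deviation_second_deriv_add_mul_pos ht0 ht.2.le (hbd t ht0).2 (habove t ht)
end

section
/- Let s satisfy s''(t) = 6 t - 6 s(t)^2 on [0, ∞) with s(0) = s'(0) = 0, and suppose s(t) > t^3 - (3/28) t^8 for t ∈ (0, (28/3)^{1/5}). Then for t in this range, s(t) < t^3 - (3/28) t^8 + (3/364) t^{13} - (3/13328) t^{18}. -/
/-!
Comparison for `s'' = 6 t - 6 s²`: as long as the lower bound `L t = t³ - (3/28) t⁸` is positive,
`s > L` gives `s² > L²`, so `s'' < 6 t - 6 L²`. The claimed upper bound `U` is the solution of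
`U'' = 6 t - 6 L²` with `U(0) = U'(0) = 0`, and integrating the strict inequality twice gives `s < U`.
-/

open Set

section Comparison

variable {f f' f'' g g' g'' : ℝ → ℝ} {a b : ℝ}

theorem lt_of_eq_of_hasDerivAt_lt (hab : a < b)
    (hf : ∀ x ∈ Icc a b, HasDerivAt f (f' x) x) (hg : ∀ x ∈ Icc a b, HasDerivAt g (g' x) x)
    (ha : f a = g a) (hlt : ∀ x ∈ Ioo a b, f' x < g' x) : f b < g b := by
  have hmono : StrictMonoOn (fun x => g x - f x) (Icc a b) :=
    strictMonoOn_of_hasDerivWithinAt_pos (convex_Icc a b)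
      (fun x hx => ((hg x hx).sub (hf x hx)).continuousAt.continuousWithinAt)
      (fun x hx => ((hg x (interior_subset hx)).sub (hf x (interior_subset hx))).hasDerivWithinAt)
      (fun x hx => sub_pos.2 (hlt x (by rwa [interior_Icc] at hx)))
  have := hmono (left_mem_Icc.2 hab.le) (right_mem_Icc.2 hab.le) hab
  simp only [ha, sub_self] at this
  linarith

theorem lt_of_eq_of_hasDerivAt₂_lt (hab : a < b)
    (hf : ∀ x ∈ Icc a b, HasDerivAt f (f' x) x) (hf' : ∀ x ∈ Icc a b, HasDerivAt f' (f'' x) x)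
    (hg : ∀ x ∈ Icc a b, HasDerivAt g (g' x) x) (hg' : ∀ x ∈ Icc a b, HasDerivAt g' (g'' x) x)
    (ha : f a = g a) (ha' : f' a = g' a) (hlt : ∀ x ∈ Ioo a b, f'' x < g'' x) : f b < g b :=
  lt_of_eq_of_hasDerivAt_lt hab hf hg ha fun _ hx =>
    lt_of_eq_of_hasDerivAt_lt hx.1
      (fun y hy => hf' y (Icc_subset_Icc_right hx.2.le hy))
      (fun y hy => hg' y (Icc_subset_Icc_right hx.2.le hy)) ha'
      (fun y hy => hlt y (Ioo_subset_Ioo_right hx.2.le hy))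

end Comparison

theorem hasDerivAt_painleveUpperBound (x : ℝ) :
    HasDerivAt (fun t : ℝ => t ^ 3 - (3 / 28) * t ^ 8 + (3 / 364) * t ^ 13 - (3 / 13328) * t ^ 18)
      (3 * x ^ 2 - (6 / 7) * x ^ 7 + (3 / 28) * x ^ 12 - (27 / 6664) * x ^ 17) x := by
  refine ((((hasDerivAt_pow 3 x).sub ((hasDerivAt_pow 8 x).const_mul (3 / 28 : ℝ))).add
      ((hasDerivAt_pow 13 x).const_mul (3 / 364 : ℝ))).sub
      ((hasDerivAt_pow 18 x).const_mul (3 / 13328 : ℝ))).congr_deriv ?_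
  push_cast
  ring

theorem hasDerivAt_deriv_painleveUpperBound (x : ℝ) :
    HasDerivAt (fun t : ℝ => 3 * t ^ 2 - (6 / 7) * t ^ 7 + (3 / 28) * t ^ 12 - (27 / 6664) * t ^ 17)
      (6 * x - 6 * (x ^ 3 - (3 / 28) * x ^ 8) ^ 2) x := by
  refine (((((hasDerivAt_pow 2 x).const_mul (3 : ℝ)).sub
      ((hasDerivAt_pow 7 x).const_mul (6 / 7 : ℝ))).add
      ((hasDerivAt_pow 12 x).const_mul (3 / 28 : ℝ))).sub
      ((hasDerivAt_pow 17 x).const_mul (27 / 6664 : ℝ))).congr_deriv ?_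
  push_cast
  ring

theorem painleveLowerBound_pos {x : ℝ} (hx : 0 < x) (hx5 : x ^ 5 < 28 / 3) :
    0 < x ^ 3 - (3 / 28) * x ^ 8 := by
  have hx3 : 0 < x ^ 3 := pow_pos hx 3
  nlinarith

theorem pow_five_lt_of_lt_rpow_one_div_five {c x : ℝ} (hc : 0 ≤ c) (hx : 0 < x)
    (hxc : x < c ^ ((1 : ℝ) / 5)) : x ^ 5 < c := by
  calc x ^ 5 < (c ^ ((1 : ℝ) / 5)) ^ 5 := pow_lt_pow_left₀ hxc hx.le (by norm_num)
    _ = c := by rw [one_div, ← Nat.cast_ofNat, Real.rpow_inv_natCast_pow hc (by norm_num)]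

theorem painleve_refined_upper_bound
    (s : ℝ → ℝ)
    (hdiff : ∀ t ∈ Ici (0 : ℝ), DifferentiableAt ℝ s t ∧ DifferentiableAt ℝ (deriv s) t)
    (heq : ∀ t ∈ Ici (0 : ℝ), deriv (deriv s) t = 6 * t - 6 * (s t) ^ 2)
    (h0 : s 0 = 0) (h0' : deriv s 0 = 0)
    (hlb : ∀ t ∈ Ioo (0 : ℝ) ((28 / 3 : ℝ) ^ ((1 : ℝ) / 5)),
      s t > t ^ 3 - (3 / 28) * t ^ 8) :
    ∀ t ∈ Ioo (0 : ℝ) ((28 / 3 : ℝ) ^ ((1 : ℝ) / 5)),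
      s t < t ^ 3 - (3 / 28) * t ^ 8 + (3 / 364) * t ^ 13 - (3 / 13328) * t ^ 18 := by
  intro t ht
  refine lt_of_eq_of_hasDerivAt₂_lt ht.1 (f' := deriv s) (f'' := deriv (deriv s))
    (fun x hx => (hdiff x hx.1).1.hasDerivAt) (fun x hx => (hdiff x hx.1).2.hasDerivAt)
    (fun x _ => hasDerivAt_painleveUpperBound x)
    (fun x _ => hasDerivAt_deriv_painleveUpperBound x) (by simp [h0]) (by simp [h0']) ?_
  intro x hx
  have hxT : x ∈ Ioo 0 ((28 / 3 : ℝ) ^ ((1 : ℝ) / 5)) := ⟨hx.1, hx.2.trans ht.2⟩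
  have hL := painleveLowerBound_pos hx.1
    (pow_five_lt_of_lt_rpow_one_div_five (by norm_num) hx.1 hxT.2)
  have hsq := pow_lt_pow_left₀ (hlb x hxT) hL.le two_ne_zero
  rw [heq x hx.1.le]
  linarith
end
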